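/- arXiv:1903.01226 — 9 statements merged into one kernel-verified Lean document; each statement's English description precedes it below -/
import Mathlib

section
/- For every f ∈ F[x] and every a ∈ A_h there exists b ∈ A_h such that f(x)·a − a·f(x) = x·b − b·x. Consequently, the F-linear span of all commutators [f(x), a] with f ∈ F[x] and a ∈ A_h equals [x, A_h]. -/
open Polynomial TensorProduct
open scoped Classical

noncomputable section

/-- The single defining relation `Y·X = X·Y + 1` of the Weyl algebra. -/
inductive WeylRel (F : Type) [Field F] :
    FreeAlgebra F (Fin 2) → FreeAlgebra F (Fin 2) → Prop
  | rel : WeylRel F (FreeAlgebra.ι F (1 : Fin 2) * FreeAlgebra.ι F (0 : Fin 2))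
      (FreeAlgebra.ι F (0 : Fin 2) * FreeAlgebra.ι F (1 : Fin 2) + 1)

/-- The first Weyl algebra `A₁` over `F`. -/
abbrev Weyl (F : Type) [Field F] : Type := RingQuot (WeylRel F)

variable (F : Type) [Field F]

/-- The image `x` of the generator `X` in the Weyl algebra. -/
def wx : Weyl F := RingQuot.mkAlgHom F (WeylRel F) (FreeAlgebra.ι F (0 : Fin 2))

/-- The image `y` of the generator `Y` in the Weyl algebra. -/
def wy : Weyl F := RingQuot.mkAlgHom F (WeylRel F) (FreeAlgebra.ι F (1 : Fin 2))

/-- The subalgebra `A_h ⊆ A₁` generated by `x` and `ŷ = y·h(x)`. -/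
def Ah (h : F[X]) : Subalgebra F (Weyl F) :=
  Algebra.adjoin F {wx F, wy F * aeval (wx F) h}

/-- The monic greatest common divisor of two polynomials over a field. -/
def mgcd (f g : F[X]) : F[X] := normalize (EuclideanDomain.gcd f g)

/-- every commutator `[f(x), a]` with `f ∈ F[x]`, `a ∈ A_h` lies in
`[x, A_h]`, and consequently the `F`-linear span of all such commutators equals
the set `[x, A_h] = {x·b − b·x : b ∈ A_h}`. -/
theorem statement0 (h : F[X]) (hh : h ≠ 0) :
    (∀ (f : F[X]), ∀ a ∈ Ah F h, ∃ b ∈ Ah F h,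
      aeval (wx F) f * a - a * aeval (wx F) f = wx F * b - b * wx F) ∧
    (Submodule.span F {c : Weyl F | ∃ (f : F[X]), ∃ a ∈ Ah F h,
        c = aeval (wx F) f * a - a * aeval (wx F) f} : Set (Weyl F)) =
      {c : Weyl F | ∃ b ∈ Ah F h, c = wx F * b - b * wx F} := by
  have hxA : wx F ∈ Ah F h := Algebra.subset_adjoin (by simp)
  -- key lemma for powers of x, by induction on the exponent
  have pow : ∀ (n : ℕ), ∀ a ∈ Ah F h, ∃ b ∈ Ah F h,
      (wx F)^n * a - a * (wx F)^n = wx F * b - b * wx F := by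
    intro n
    induction n with
    | zero => intro a ha; exact ⟨0, (Ah F h).zero_mem, by simp⟩
    | succ n ih =>
      intro a ha
      obtain ⟨b, hb, hb2⟩ := ih a ha
      refine ⟨wx F * b + a * (wx F)^n, (Ah F h).add_mem ((Ah F h).mul_mem hxA hb)
        ((Ah F h).mul_mem ha ((Ah F h).pow_mem hxA n)), ?_⟩
      have hz : (wx F) ^ n * wx F = wx F * (wx F) ^ n := by rw [← pow_succ, ← pow_succ']
      calc (wx F)^(n+1) * a - a * (wx F)^(n+1)
          = wx F * ((wx F)^n * a - a * (wx F)^n)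
            + (wx F * (a * (wx F)^n) - a * ((wx F)^n * wx F)) := by
            rw [pow_succ]; noncomm_ring
            rw [← mul_assoc, hz, mul_assoc, add_comm]
            simp only [mul_smul_comm]; abel
        _ = wx F * (wx F * b - b * wx F)
            + (wx F * (a * (wx F)^n) - a * ((wx F)^n * wx F)) := by rw [hb2]
        _ = wx F * (wx F * b + a * (wx F)^n) - (wx F * b + a * (wx F)^n) * wx F := by
            noncomm_ring
            simp only [mul_smul_comm]; abel
  -- key lemma for arbitrary polynomials, by linearity
  have key : ∀ (f : F[X]), ∀ a ∈ Ah F h, ∃ b ∈ Ah F h,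
      aeval (wx F) f * a - a * aeval (wx F) f = wx F * b - b * wx F := by
    intro f
    induction f using Polynomial.induction_on' with
    | add p q hp hq =>
      intro a ha
      obtain ⟨b1, hb1, e1⟩ := hp a ha
      obtain ⟨b2, hb2, e2⟩ := hq a ha
      refine ⟨b1 + b2, (Ah F h).add_mem hb1 hb2, ?_⟩
      have : aeval (wx F) (p + q) * a - a * aeval (wx F) (p + q)
          = (aeval (wx F) p * a - a * aeval (wx F) p)
            + (aeval (wx F) q * a - a * aeval (wx F) q) := by
        rw [map_add]; noncomm_ring
      rw [this, e1, e2]; noncomm_ring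
    | monomial n c =>
      intro a ha
      obtain ⟨b, hb, e⟩ := pow n a ha
      refine ⟨c • b, (Ah F h).smul_mem hb c, ?_⟩
      have hm : aeval (wx F) (Polynomial.monomial n c) = c • (wx F)^n := by
        rw [aeval_monomial, ← Algebra.smul_def]
      rw [hm]
      calc c • (wx F)^n * a - a * (c • (wx F)^n)
          = c • ((wx F)^n * a - a * (wx F)^n) := by
            rw [smul_sub, smul_mul_assoc, mul_smul_comm]
        _ = c • (wx F * b - b * wx F) := by rw [e]
        _ = wx F * (c • b) - (c • b) * wx F := by
            rw [smul_sub, mul_smul_comm, smul_mul_assoc]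
  refine ⟨key, ?_⟩
  -- the RHS set is the image of the submodule A_h under the linear map b ↦ x*b - b*x
  set L : Weyl F →ₗ[F] Weyl F :=
    LinearMap.mulLeft F (wx F) - LinearMap.mulRight F (wx F) with hL
  have hLapp : ∀ b : Weyl F, L b = wx F * b - b * wx F := by
    intro b
    simp [hL, LinearMap.sub_apply, LinearMap.mulLeft_apply, LinearMap.mulRight_apply]
  set M : Submodule F (Weyl F) :=
    Submodule.map L (Subalgebra.toSubmodule (Ah F h)) with hM
  have hMset : (M : Set (Weyl F)) = {c : Weyl F | ∃ b ∈ Ah F h, c = wx F * b - b * wx F} := by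
    ext c
    constructor
    · intro hc
      obtain ⟨b, hb, rfl⟩ := Submodule.mem_map.1 hc
      exact ⟨b, (Subalgebra.mem_toSubmodule _).1 hb, (hLapp b).symm⟩
    · rintro ⟨b, hb, rfl⟩
      exact Submodule.mem_map.2 ⟨b, (Subalgebra.mem_toSubmodule _).2 hb, hLapp b⟩
  rw [← hMset]
  apply Set.Subset.antisymm
  · intro c hc
    refine Submodule.span_le.2 ?_ hc
    rintro d ⟨f, a, ha, rfl⟩
    obtain ⟨b, hb, e⟩ := key f a ha
    exact Submodule.mem_map.2 ⟨b, (Subalgebra.mem_toSubmodule _).2 hb, by rw [hLapp b, e]⟩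
  · intro c hc
    obtain ⟨b, hb, rfl⟩ := Submodule.mem_map.1 hc
    apply Submodule.subset_span
    exact ⟨Polynomial.X, b, (Subalgebra.mem_toSubmodule _).1 hb, by rw [hLapp b, aeval_X]⟩
end
end

section
/- For every α ∈ A₁ and all f, g ∈ F[x], F_α(f·g) = f(x)·F_α(g) + F_α(f)·g(x) (i.e., F_α is a derivation along the embedding F[x] → A₁). Moreover, if α ∈ A_h, then for every f ∈ F[x] there exists b ∈ A_h with F_α(f) = f'(x)·α + (xb − bx), where f' is the formal derivative of f. -/
open Polynomial TensorProduct
open scoped Classical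

noncomputable section

variable (F : Type) [Field F]

/-!
Both claims are linear in the polynomials, so it suffices to check them on monomials. There the
derivation rule is a reindexing of the defining sum. For the second claim, work modulo
`[x, A_h]`: this subspace is stable under left multiplication by `x`, and modulo it every element
of `A_h` commutes with the powers of `x`; hence each of the `s` terms `x^ℓ α x^(s-1-ℓ)` of
`F_α(x^s)` is congruent to `x^(s-1) α`.
-/

section Derivation

variable {R A : Type*} [CommRing R] [Ring A] [Algebra R A]

theorem map_X_pow_mul_X_pow {D : R[X] →ₗ[R] A} {a α : A}
    (hD : ∀ s : ℕ, D (X ^ s) = ∑ ℓ ∈ Finset.range s, a ^ ℓ * α * a ^ (s - 1 - ℓ))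
    (s t : ℕ) : D (X ^ s * X ^ t) = a ^ s * D (X ^ t) + D (X ^ s) * a ^ t := by
  rw [← pow_add, hD, hD, hD, Finset.sum_range_add, Finset.mul_sum, Finset.sum_mul, add_comm]
  congr 1
  · refine Finset.sum_congr rfl fun j hj => ?_
    rw [Finset.mem_range] at hj
    rw [show s + t - 1 - (s + j) = t - 1 - j by omega, pow_add]
    noncomm_ring
  · refine Finset.sum_congr rfl fun ℓ hℓ => ?_
    rw [Finset.mem_range] at hℓ
    rw [show s + t - 1 - ℓ = (s - 1 - ℓ) + t by omega, pow_add]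
    noncomm_ring

theorem map_mul_eq_aeval_mul_add_mul_aeval {D : R[X] →ₗ[R] A} {a α : A}
    (hD : ∀ s : ℕ, D (X ^ s) = ∑ ℓ ∈ Finset.range s, a ^ ℓ * α * a ^ (s - 1 - ℓ))
    (f g : R[X]) : D (f * g) = aeval a f * D g + D f * aeval a g := by
  induction f using Polynomial.induction_on' with
  | add p q hp hq => simp only [add_mul, map_add, hp, hq]; abel
  | monomial n c =>
    induction g using Polynomial.induction_on' with
    | add p q hp hq => simp only [mul_add, map_add, hp, hq]; abel
    | monomial m d =>
      simp only [← smul_X_eq_monomial, map_smul, map_X_pow_mul_X_pow hD,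
        map_pow, aeval_X, smul_add, smul_mul_assoc, mul_smul_comm, smul_smul]

end Derivation

section Commutators

variable {R A : Type*} [CommRing R] [Ring A] [Algebra R A] {a : A} {S : Subalgebra R A}

/-- `[a, S] = {a * b - b * a | b ∈ S}`. -/
def commutators (a : A) (S : Subalgebra R A) : Submodule R A :=
  (Subalgebra.toSubmodule S).map (LinearMap.mulLeft R a - LinearMap.mulRight R a)

theorem mem_commutators {m : A} : m ∈ commutators a S ↔ ∃ b ∈ S, a * b - b * a = m := by
  simp [commutators]

theorem mul_sub_mul_mem_commutators {b : A} (hb : b ∈ S) : a * b - b * a ∈ commutators a S :=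
  mem_commutators.2 ⟨b, hb, rfl⟩

theorem mul_mem_commutators (ha : a ∈ S) {m : A} (hm : m ∈ commutators a S) :
    a * m ∈ commutators a S := by
  obtain ⟨b, hb, rfl⟩ := mem_commutators.1 hm
  -- `a · [a, b] = [a, a b]`
  convert mul_sub_mul_mem_commutators (mul_mem ha hb) using 1
  noncomm_ring

theorem pow_mul_mem_commutators (ha : a ∈ S) {m : A} (hm : m ∈ commutators a S) (k : ℕ) :
    a ^ k * m ∈ commutators a S := by
  induction k with
  | zero => simpa using hm
  | succ k ih => simpa [pow_succ', mul_assoc] using mul_mem_commutators ha ih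

theorem mul_pow_sub_pow_mul_mem_commutators (ha : a ∈ S) {z : A} (hz : z ∈ S) (k : ℕ) :
    z * a ^ k - a ^ k * z ∈ commutators a S := by
  induction k with
  | zero => simp
  | succ k ih =>
    have hzk : z * a ^ k ∈ S := mul_mem hz (pow_mem ha k)
    convert sub_mem (mul_mem_commutators ha ih) (mul_sub_mul_mem_commutators hzk) using 1
    nth_rewrite 1 [pow_succ]
    rw [pow_succ']
    noncomm_ring

theorem map_X_pow_sub_mem_commutators {D : R[X] →ₗ[R] A} {α : A}
    (hD : ∀ s : ℕ, D (X ^ s) = ∑ ℓ ∈ Finset.range s, a ^ ℓ * α * a ^ (s - 1 - ℓ))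
    (ha : a ∈ S) (hα : α ∈ S) (s : ℕ) :
    D (X ^ s) - aeval a (derivative (X ^ s : R[X])) * α ∈ commutators a S := by
  have hsum : aeval a (derivative (X ^ s : R[X])) * α =
      ∑ ℓ ∈ Finset.range s, a ^ ℓ * (a ^ (s - 1 - ℓ) * α) := by
    have hterm : ∀ ℓ ∈ Finset.range s, a ^ ℓ * (a ^ (s - 1 - ℓ) * α) = a ^ (s - 1) * α := by
      intro ℓ hℓ
      rw [Finset.mem_range] at hℓ
      rw [← mul_assoc, ← pow_add, show ℓ + (s - 1 - ℓ) = s - 1 by omega]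
    rw [Finset.sum_congr rfl hterm, Finset.sum_const, Finset.card_range, derivative_X_pow,
      map_mul, aeval_C, map_pow, aeval_X, ← Algebra.smul_def, smul_mul_assoc,
      Nat.cast_smul_eq_nsmul]
  rw [hD, hsum, ← Finset.sum_sub_distrib]
  refine Submodule.sum_mem _ fun ℓ _ => ?_
  rw [mul_assoc, ← mul_sub]
  exact pow_mul_mem_commutators ha (mul_pow_sub_pow_mul_mem_commutators ha hα _) ℓ

theorem map_sub_derivative_mem_commutators {D : R[X] →ₗ[R] A} {α : A}
    (hD : ∀ s : ℕ, D (X ^ s) = ∑ ℓ ∈ Finset.range s, a ^ ℓ * α * a ^ (s - 1 - ℓ))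
    (ha : a ∈ S) (hα : α ∈ S) (f : R[X]) :
    D f - aeval a (derivative f) * α ∈ commutators a S := by
  induction f using Polynomial.induction_on' with
  | add p q hp hq =>
    convert add_mem hp hq using 1
    simp only [map_add, add_mul]
    abel
  | monomial n c =>
    convert Submodule.smul_mem _ c (map_X_pow_sub_mem_commutators hD ha hα n) using 1
    simp only [← smul_X_eq_monomial, map_smul, smul_sub, smul_mul_assoc]

end Commutators

theorem statement3 (h : F[X]) (α : Weyl F) (Fα : F[X] →ₗ[F] Weyl F)
    (hFα : ∀ s : ℕ, Fα (X ^ s) =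
      ∑ ℓ ∈ Finset.range s, wx F ^ ℓ * α * wx F ^ (s - 1 - ℓ)) :
    (∀ f g : F[X], Fα (f * g) = aeval (wx F) f * Fα g + Fα f * aeval (wx F) g) ∧
    (α ∈ Ah F h → ∀ f : F[X], ∃ b ∈ Ah F h,
      Fα f = aeval (wx F) (derivative f) * α + (wx F * b - b * wx F)) := by
  refine ⟨map_mul_eq_aeval_mul_add_mul_aeval hFα, fun hα f => ?_⟩
  have hx : wx F ∈ Ah F h := Algebra.subset_adjoin (by simp)
  obtain ⟨b, hb, hFb⟩ := mem_commutators.1 (map_sub_derivative_mem_commutators hFα hx hα f)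
  exact ⟨b, hb, by rw [hFb, add_sub_cancel]⟩
end
end

section
/- For all α, β ∈ A_h, D₂(α, β) := (βx − xβ) + (ŷα − αŷ) − F_α(h) lies in gcd(h, h')(x)·A_h. -/
open Polynomial TensorProduct
open scoped Classical

noncomputable section

variable (F : Type) [Field F]

/-!
Let `g = gcd(h, h')`. From `ŷ·p(x) = p(x)·ŷ + (p'h)(x)`, every divisor `d` of `h` satisfies
`A_h·d(x) ⊆ d(x)·A_h`, so `h(x)·A_h ⊆ g(x)·A_h` are two-sided ideals of `A_h`. Commutation with a
fixed element is a derivation, so `[β, x]` and `[ŷ, α]` lie in `h(x)·A_h` because they do when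
`β, α` are the generators `x, ŷ` (where `[ŷ, x] = h(x)`). In the same way
`F_α(x^s) ≡ s·x^(s-1)·α` modulo `h(x)·A_h`, hence `F_α(h) ≡ h'(x)·α ∈ g(x)·A_h`.
-/

theorem mul_sub_mul_mem_of_mem_adjoin {R A : Type*} [CommSemiring R] [Ring A] [Algebra R A]
    {s : Set A} {J : Submodule R A} (hleft : ∀ a ∈ Algebra.adjoin R s, ∀ w ∈ J, a * w ∈ J)
    (hright : ∀ w ∈ J, ∀ a ∈ Algebra.adjoin R s, w * a ∈ J) {z : A}
    (hz : ∀ t ∈ s, t * z - z * t ∈ J) {a : A} (ha : a ∈ Algebra.adjoin R s) :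
    a * z - z * a ∈ J := by
  induction ha using Algebra.adjoin_induction with
  | mem t ht => exact hz t ht
  | algebraMap r => simp [Algebra.commutes]
  | add u v _ _ hu hv =>
    convert add_mem hu hv using 1
    noncomm_ring
  | mul u v hu' hv' hu hv =>
    convert add_mem (hleft u hu' _ hv) (hright _ hu v hv') using 1
    noncomm_ring

section

variable {F}

theorem wy_mul_wx : wy F * wx F = wx F * wy F + 1 := by
  simpa [wx, wy] using RingQuot.mkAlgHom_rel F (WeylRel.rel (F := F))

theorem commute_wx_aeval (p : F[X]) : Commute (wx F) (aeval (wx F) p) := by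
  show wx F * _ = _ * wx F
  simpa using congrArg (aeval (wx F)) (mul_comm X p)

theorem wy_mul_aeval (p : F[X]) :
    wy F * aeval (wx F) p = aeval (wx F) p * wy F + aeval (wx F) (derivative p) := by
  induction p using Polynomial.induction_on with
  | C a => simp [Algebra.commutes]
  | add p q hp hq =>
    simp only [map_add, mul_add, add_mul, hp, hq]
    abel
  | monomial n a ih =>
    rw [pow_succ, ← mul_assoc]
    generalize C a * X ^ n = q at ih ⊢
    rw [derivative_mul, derivative_X, mul_one, map_add, map_mul, map_mul, aeval_X, ← mul_assoc,
      ih, add_mul, mul_assoc (aeval (wx F) q), wy_mul_wx]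
    noncomm_ring

def yhat (h : F[X]) : Weyl F := wy F * aeval (wx F) h

variable {h : F[X]}

theorem yhat_mul_aeval (p : F[X]) :
    yhat h * aeval (wx F) p = aeval (wx F) p * yhat h + aeval (wx F) (derivative p * h) := by
  rw [yhat, mul_assoc, ← map_mul, mul_comm h, map_mul, ← mul_assoc, wy_mul_aeval, add_mul,
    mul_assoc, ← map_mul]

theorem yhat_mul_wx : yhat h * wx F = wx F * yhat h + aeval (wx F) h := by
  simpa using yhat_mul_aeval (h := h) X

theorem wx_mem_Ah : wx F ∈ Ah F h := Algebra.subset_adjoin (by simp)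

theorem yhat_mem_Ah : yhat h ∈ Ah F h := Algebra.subset_adjoin (by simp [yhat])

theorem aeval_mem_Ah (p : F[X]) : aeval (wx F) p ∈ Ah F h :=
  Algebra.adjoin_mono (by simp) (aeval_mem_adjoin_singleton F (wx F))

variable (h) in
/-- `d(x)·A_h`; it is a two-sided ideal of `A_h` when `d ∣ h`. -/
def polyMulAh (d : F[X]) : Submodule F (Weyl F) :=
  (Subalgebra.toSubmodule (Ah F h)).map (LinearMap.mulLeft F (aeval (wx F) d))

variable {d : F[X]} {a w : Weyl F}

theorem mem_polyMulAh : w ∈ polyMulAh h d ↔ ∃ c ∈ Ah F h, aeval (wx F) d * c = w := by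
  simp [polyMulAh]

theorem aeval_mul_mem_polyMulAh (ha : a ∈ Ah F h) : aeval (wx F) d * a ∈ polyMulAh h d :=
  mem_polyMulAh.2 ⟨a, ha, rfl⟩

theorem aeval_mem_polyMulAh {p : F[X]} (hp : d ∣ p) : aeval (wx F) p ∈ polyMulAh h d := by
  obtain ⟨k, rfl⟩ := hp
  simpa using aeval_mul_mem_polyMulAh (aeval_mem_Ah (h := h) k)

theorem polyMulAh_mono {e : F[X]} (hde : d ∣ e) : polyMulAh h e ≤ polyMulAh h d := by
  intro w hw
  obtain ⟨c, hc, rfl⟩ := mem_polyMulAh.1 hw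
  obtain ⟨k, rfl⟩ := hde
  simpa [mul_assoc] using aeval_mul_mem_polyMulAh (mul_mem (aeval_mem_Ah (h := h) k) hc)

theorem mul_mem_polyMulAh_right (hw : w ∈ polyMulAh h d) (ha : a ∈ Ah F h) :
    w * a ∈ polyMulAh h d := by
  obtain ⟨c, hc, rfl⟩ := mem_polyMulAh.1 hw
  simpa [mul_assoc] using aeval_mul_mem_polyMulAh (mul_mem hc ha)

theorem mul_aeval_mem_polyMulAh (hd : d ∣ h) (ha : a ∈ Ah F h) :
    a * aeval (wx F) d ∈ polyMulAh h d := by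
  induction ha using Algebra.adjoin_induction with
  | mem z hz =>
    obtain rfl | rfl := hz
    · rw [(commute_wx_aeval d).eq]
      exact aeval_mul_mem_polyMulAh wx_mem_Ah
    · obtain ⟨k, hk⟩ := hd
      change yhat h * _ ∈ _
      rw [yhat_mul_aeval, show derivative d * h = d * (derivative d * k) by rw [hk]; ring,
        map_mul, ← mul_add]
      exact aeval_mul_mem_polyMulAh (add_mem yhat_mem_Ah (aeval_mem_Ah _))
  | algebraMap r =>
    rw [Algebra.commutes]
    exact aeval_mul_mem_polyMulAh (Subalgebra.algebraMap_mem _ r)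
  | add u v _ _ hu hv => simpa [add_mul] using add_mem hu hv
  | mul u v _ hv' hu hv =>
    obtain ⟨c, hc, hvc⟩ := mem_polyMulAh.1 hv
    rw [mul_assoc, ← hvc, ← mul_assoc]
    exact mul_mem_polyMulAh_right hu hc

theorem mul_mem_polyMulAh_left (hd : d ∣ h) (ha : a ∈ Ah F h) (hw : w ∈ polyMulAh h d) :
    a * w ∈ polyMulAh h d := by
  obtain ⟨c, hc, rfl⟩ := mem_polyMulAh.1 hw
  rw [← mul_assoc]
  exact mul_mem_polyMulAh_right (mul_aeval_mem_polyMulAh hd ha) hc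

theorem commutator_mem_polyMulAh {z : Weyl F} (hx : wx F * z - z * wx F ∈ polyMulAh h h)
    (hy : yhat h * z - z * yhat h ∈ polyMulAh h h) (ha : a ∈ Ah F h) :
    a * z - z * a ∈ polyMulAh h h :=
  mul_sub_mul_mem_of_mem_adjoin (s := {wx F, yhat h})
    (fun _ hb _ hw => mul_mem_polyMulAh_left dvd_rfl hb hw)
    (fun _ hw _ hb => mul_mem_polyMulAh_right hw hb) (by rintro t (rfl | rfl) <;> assumption) ha

theorem mul_aeval_sub_mem_polyMulAh (p : F[X]) (ha : a ∈ Ah F h) :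
    a * aeval (wx F) p - aeval (wx F) p * a ∈ polyMulAh h h := by
  refine commutator_mem_polyMulAh ?_ ?_ ha
  · rw [(commute_wx_aeval p).eq, sub_self]
    exact zero_mem _
  · rw [yhat_mul_aeval, add_sub_cancel_left]
    exact aeval_mem_polyMulAh (dvd_mul_left h _)

theorem mul_yhat_sub_mem_polyMulAh (ha : a ∈ Ah F h) :
    a * yhat h - yhat h * a ∈ polyMulAh h h := by
  refine commutator_mem_polyMulAh ?_ (by rw [sub_self]; exact zero_mem _) ha
  rw [yhat_mul_wx, sub_add_cancel_left]
  exact neg_mem (aeval_mem_polyMulAh dvd_rfl)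

theorem sum_pow_mul_pow_sub_mem_polyMulAh (ha : a ∈ Ah F h) (n : ℕ) :
    ∑ ℓ ∈ Finset.range n, wx F ^ ℓ * a * wx F ^ (n - 1 - ℓ) - n * (wx F ^ (n - 1) * a) ∈
      polyMulAh h h := by
  have hconst : (n : Weyl F) * (wx F ^ (n - 1) * a) =
      ∑ _ℓ ∈ Finset.range n, wx F ^ (n - 1) * a := by
    simp
  rw [hconst, ← Finset.sum_sub_distrib]
  refine sum_mem fun ℓ hℓ => ?_
  have hsplit : wx F ^ (n - 1) = wx F ^ ℓ * wx F ^ (n - 1 - ℓ) := by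
    rw [← pow_add, Nat.add_sub_of_le (Nat.le_sub_one_of_lt (Finset.mem_range.1 hℓ))]
  rw [hsplit, mul_assoc, mul_assoc, ← mul_sub]
  simpa using mul_mem_polyMulAh_left dvd_rfl (pow_mem (wx_mem_Ah (h := h)) ℓ)
    (mul_aeval_sub_mem_polyMulAh (X ^ (n - 1 - ℓ)) ha)

theorem linearMap_sub_aeval_derivative_mul_mem_polyMulAh (ha : a ∈ Ah F h)
    (Fa : F[X] →ₗ[F] Weyl F)
    (hFa : ∀ s : ℕ, Fa (X ^ s) = ∑ ℓ ∈ Finset.range s, wx F ^ ℓ * a * wx F ^ (s - 1 - ℓ))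
    (p : F[X]) : Fa p - aeval (wx F) (derivative p) * a ∈ polyMulAh h h := by
  induction p using Polynomial.induction_on' with
  | add p q hp hq =>
    convert add_mem hp hq using 1
    simp only [map_add, add_mul]
    abel
  | monomial n c =>
    have := Submodule.smul_mem (polyMulAh h h) c (sum_pow_mul_pow_sub_mem_polyMulAh ha n)
    rw [← smul_X_eq_monomial, map_smul, derivative_smul, map_smul, smul_mul_assoc, hFa]
    convert this using 1
    simp [derivative_X_pow, smul_sub, mul_assoc]

end

theorem statement4 (h : F[X]) (α β : Weyl F)
    (hα : α ∈ Ah F h) (hβ : β ∈ Ah F h) (Fα : F[X] →ₗ[F] Weyl F)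
    (hFα : ∀ s : ℕ, Fα (X ^ s) =
      ∑ ℓ ∈ Finset.range s, wx F ^ ℓ * α * wx F ^ (s - 1 - ℓ)) :
    ∃ c ∈ Ah F h,
      (β * wx F - wx F * β) +
        ((wy F * aeval (wx F) h) * α - α * (wy F * aeval (wx F) h)) - Fα h
      = aeval (wx F) (mgcd F h (derivative h)) * c := by
  set g := mgcd F h (derivative h)
  have hgh : g ∣ h := normalize_dvd_iff.2 (EuclideanDomain.gcd_dvd_left _ _)
  have hgh' : g ∣ derivative h := normalize_dvd_iff.2 (EuclideanDomain.gcd_dvd_right _ _)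
  have hcomm : (β * wx F - wx F * β) - (α * yhat h - yhat h * α) ∈ polyMulAh h h :=
    sub_mem (by simpa using mul_aeval_sub_mem_polyMulAh X hβ) (mul_yhat_sub_mem_polyMulAh hα)
  have hFα_h : Fα h - aeval (wx F) (derivative h) * α ∈ polyMulAh h h :=
    linearMap_sub_aeval_derivative_mul_mem_polyMulAh hα Fα hFα h
  have hh' : aeval (wx F) (derivative h) * α ∈ polyMulAh h g :=
    mul_mem_polyMulAh_right (aeval_mem_polyMulAh hgh') hα
  obtain ⟨c, hc, hD⟩ := mem_polyMulAh.1 <|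
    sub_mem (sub_mem (polyMulAh_mono hgh hcomm) (polyMulAh_mono hgh hFα_h)) hh'
  refine ⟨c, hc, ?_⟩
  rw [hD, yhat]
  abel
end
end

section
/- Assume char F = p > 0 and that h' = 0 (equivalently, h is a polynomial in x^p, so h(x) is central in A_h). Then the image of D₂ equals [x, A_h] + [ŷ, A_h], i.e., {D₂(α, β) : α, β ∈ A_h} = {(xb − bx) + (ŷc − cŷ) : b, c ∈ A_h}. -/
open Polynomial TensorProduct
open scoped Classical

noncomputable section

variable (F : Type) [Field F]

/- Since `x ^ ℓ * α * x ^ (s - 1 - ℓ) = [x ^ ℓ, α] * x ^ (s - 1 - ℓ) + α * x ^ (s - 1)` and each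
`[x ^ ℓ, α]` lies in `[x, A_h]`, the element `F_α(h)` is congruent modulo `[x, A_h]` to
`α · h'(x)`, which vanishes. Hence `D₂(α, β) = -[x, β] + [ŷ, α] - F_α(h)` differs from
`[ŷ, α]` by an element of `[x, A_h]`, and conversely. -/

section AdImage

variable {R A : Type*} [CommRing R] [Ring A] [Algebra R A]

/-- `[x, S] = {x * b - b * x | b ∈ S}`. -/
def adImage (x : A) (S : Subalgebra R A) : Submodule R A :=
  LinearMap.range ((LinearMap.mulLeft R x - LinearMap.mulRight R x) ∘ₗ S.val.toLinearMap)

variable {x : A} {S : Subalgebra R A}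

theorem mem_adImage {u : A} : u ∈ adImage x S ↔ ∃ b ∈ S, x * b - b * x = u := by
  simp [adImage]

theorem commutator_mem_adImage {b : A} (hb : b ∈ S) : x * b - b * x ∈ adImage x S :=
  mem_adImage.2 ⟨b, hb, rfl⟩

theorem mul_mem_adImage_left (hx : x ∈ S) {u : A} (hu : u ∈ adImage x S) :
    x * u ∈ adImage x S := by
  obtain ⟨b, hb, rfl⟩ := mem_adImage.1 hu
  exact mem_adImage.2 ⟨x * b, mul_mem hx hb, by noncomm_ring⟩

theorem mul_mem_adImage_right {u v : A} (hu : u ∈ adImage x S) (hv : v ∈ S)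
    (hxv : Commute x v) : u * v ∈ adImage x S := by
  obtain ⟨b, hb, rfl⟩ := mem_adImage.1 hu
  refine mem_adImage.2 ⟨b * v, mul_mem hb hv, ?_⟩
  simp only [sub_mul, mul_assoc, hxv.eq]

theorem pow_commutator_mem_adImage (hx : x ∈ S) {α : A} (hα : α ∈ S) (ℓ : ℕ) :
    x ^ ℓ * α - α * x ^ ℓ ∈ adImage x S := by
  induction ℓ with
  | zero => simp
  | succ n ih =>
    have hsplit : x ^ (n + 1) * α - α * x ^ (n + 1) =
        x * (x ^ n * α - α * x ^ n) + (x * α - α * x) * x ^ n := by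
      rw [pow_succ']; noncomm_ring
    rw [hsplit]
    exact add_mem (mul_mem_adImage_left hx ih)
      (mul_mem_adImage_right (commutator_mem_adImage hα) (pow_mem hx n)
        ((Commute.refl x).pow_right n))

theorem sum_pow_mul_pow_sub_mem_adImage (hx : x ∈ S) {α : A} (hα : α ∈ S) (s : ℕ) :
    ∑ ℓ ∈ Finset.range s, x ^ ℓ * α * x ^ (s - 1 - ℓ) - s • (α * x ^ (s - 1)) ∈
      adImage x S := by
  have hterm : ∀ ℓ ∈ Finset.range s, x ^ ℓ * α * x ^ (s - 1 - ℓ) - α * x ^ (s - 1) =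
      (x ^ ℓ * α - α * x ^ ℓ) * x ^ (s - 1 - ℓ) := fun ℓ hℓ => by
    have hexp : ℓ + (s - 1 - ℓ) = s - 1 := by have := Finset.mem_range.1 hℓ; omega
    rw [sub_mul, mul_assoc α, ← pow_add, hexp]
  have hconst : s • (α * x ^ (s - 1)) = ∑ _ℓ ∈ Finset.range s, α * x ^ (s - 1) := by simp
  rw [hconst, ← Finset.sum_sub_distrib, Finset.sum_congr rfl hterm]
  exact Submodule.sum_mem _ fun ℓ _ => mul_mem_adImage_right
    (pow_commutator_mem_adImage hx hα ℓ) (pow_mem hx _) ((Commute.refl x).pow_right _)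

theorem sub_mul_aeval_derivative_mem_adImage (hx : x ∈ S) {α : A} (hα : α ∈ S)
    (Fα : R[X] →ₗ[R] A)
    (hFα : ∀ s : ℕ, Fα (X ^ s) = ∑ ℓ ∈ Finset.range s, x ^ ℓ * α * x ^ (s - 1 - ℓ))
    (q : R[X]) : Fα q - α * aeval x (derivative q) ∈ adImage x S := by
  induction q using Polynomial.induction_on' with
  | add p q hp hq =>
    simpa only [map_add, mul_add, add_sub_add_comm] using add_mem hp hq
  | monomial s a =>
    have hmon : Fα (X ^ s) - α * aeval x (derivative (X ^ s : R[X])) =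
        ∑ ℓ ∈ Finset.range s, x ^ ℓ * α * x ^ (s - 1 - ℓ) - s • (α * x ^ (s - 1)) := by
      simp [hFα, derivative_X_pow, nsmul_eq_mul, mul_assoc, Nat.cast_comm]
    have := Submodule.smul_mem _ a
      (hmon ▸ sum_pow_mul_pow_sub_mem_adImage hx hα s)
    simpa only [← C_mul_X_pow_eq_monomial, ← smul_eq_C_mul, map_smul, smul_sub,
      mul_smul_comm] using this

theorem image_sub_eq_of_mem_adImage {x y : A} {f : A → A}
    (hf : ∀ α ∈ S, f α ∈ adImage x S) :
    {c : A | ∃ α ∈ S, ∃ β ∈ S, c = (β * x - x * β) + (y * α - α * y) - f α} =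
      {c : A | ∃ b ∈ S, ∃ b' ∈ S, c = (x * b - b * x) + (y * b' - b' * y)} := by
  ext c
  constructor
  · rintro ⟨α, hα, β, hβ, rfl⟩
    obtain ⟨b₀, hb₀, e⟩ := mem_adImage.1 (hf α hα)
    refine ⟨-β - b₀, sub_mem (neg_mem hβ) hb₀, α, hα, ?_⟩
    rw [← e]; noncomm_ring
  · rintro ⟨b, hb, b', hb', rfl⟩
    obtain ⟨b₀, hb₀, e⟩ := mem_adImage.1 (hf b' hb')
    refine ⟨b', hb', -(b + b₀), neg_mem (add_mem hb hb₀), ?_⟩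
    rw [← e]; noncomm_ring

end AdImage

theorem statement6 (h : F[X])
    (hder : derivative h = 0)
    (Fm : Weyl F → (F[X] →ₗ[F] Weyl F))
    (hFm : ∀ (α : Weyl F) (s : ℕ), Fm α (X ^ s) =
      ∑ ℓ ∈ Finset.range s, wx F ^ ℓ * α * wx F ^ (s - 1 - ℓ)) :
    {c : Weyl F | ∃ α ∈ Ah F h, ∃ β ∈ Ah F h,
        c = (β * wx F - wx F * β) +
          ((wy F * aeval (wx F) h) * α - α * (wy F * aeval (wx F) h)) - Fm α h} =
      {c : Weyl F | ∃ b ∈ Ah F h, ∃ b' ∈ Ah F h,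
        c = (wx F * b - b * wx F) +
          ((wy F * aeval (wx F) h) * b' - b' * (wy F * aeval (wx F) h))} := by
  have hx : wx F ∈ Ah F h := Algebra.subset_adjoin (Set.mem_insert _ _)
  refine image_sub_eq_of_mem_adImage fun α hα => ?_
  simpa only [hder, map_zero, mul_zero, sub_zero] using sub_mul_aeval_derivative_mem_adImage hx hα (Fm α) (hFm α) h
end
end

section
/- Assume char F = p > 0. Then the image κ(F[x]) of the map κ(g) = g'·h − h'·g is a free F[xᵖ]-submodule of F[x] of rank p − 1. -/
open Polynomial
open scoped Classical

noncomputable section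

namespace Stmt11

variable {F : Type} [Field F]

/-- Type synonym for `F[X]` viewed as a module over `F[X]` acting through `expand F p`. -/
def M (F : Type) [Field F] (_p : ℕ) : Type := F[X]

instance {p : ℕ} : AddCommGroup (M F p) := inferInstanceAs (AddCommGroup F[X])

instance {p : ℕ} : Module F[X] (M F p) :=
  Module.compHom F[X] ((expand F p : F[X] →ₐ[F] F[X]).toRingHom)

/-- The identity, as an additive equivalence between `M F p` and `F[X]`. -/
def tP {p : ℕ} : M F p ≃+ F[X] := AddEquiv.refl F[X]

lemma tP_smul {p : ℕ} (c : F[X]) (m : M F p) :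
    tP (c • m) = expand F p c * tP m := rfl

/-- In characteristic `p`, `expand`ed polynomials have zero derivative. -/
lemma deriv_expand (p : ℕ) [CharP F p] (hp : 0 < p) (c : F[X]) :
    derivative (expand F p c) = 0 := by
  have hchar : ((p : ℕ) : F[X]) = 0 := by
    rw [← C_eq_natCast, CharP.cast_eq_zero F p, map_zero]
  rw [Polynomial.derivative_expand, hchar, zero_mul, mul_zero]

/-- The map `κ` as an `F[X]`-linear map on `M F p`. -/
def kappa (p : ℕ) [CharP F p] (hp : 0 < p) (h : F[X]) : M F p →ₗ[F[X]] M F p where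
  toFun g := tP.symm (derivative (tP g) * h - derivative h * tP g)
  map_add' a b := by
    apply tP.injective
    simp only [map_add, AddEquiv.apply_symm_apply]
    ring
  map_smul' c g := by
    apply tP.injective
    simp only [RingHom.id_apply, tP_smul, AddEquiv.apply_symm_apply]
    rw [derivative_mul, deriv_expand p hp c, zero_mul, zero_add]
    ring

lemma tP_kappa (p : ℕ) [CharP F p] (hp : 0 < p) (h : F[X]) (g : M F p) :
    tP (kappa p hp h g) = derivative (tP g) * h - derivative h * tP g := by
  simp [kappa]

lemma kappa_h (p : ℕ) [CharP F p] (hp : 0 < p) (h : F[X]) :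
    kappa p hp h (tP.symm h) = 0 := by
  apply tP.injective
  rw [tP_kappa, map_zero]
  simp [mul_comm]

/-- key independence lemma: families `expand F p (c j) * X ^ j`, `j < n ≤ p`. -/
lemma expand_indep (p : ℕ) (hp : 0 < p) (n : ℕ) (hn : n ≤ p) (c : Fin n → F[X])
    (hc : ∑ j : Fin n, expand F p (c j) * X ^ (j : ℕ) = 0) : ∀ j, c j = 0 := by
  intro j
  ext m
  have key : ∀ k : Fin n, (expand F p (c k) * X ^ (k : ℕ)).coeff (p * m + j) =
      if k = j then (c j).coeff m else 0 := by
    intro k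
    rw [coeff_mul_X_pow']
    split_ifs with h1 h2 h2
    · subst h2
      rw [Nat.add_sub_cancel, coeff_expand hp, if_pos ⟨m, rfl⟩, Nat.mul_div_cancel_left _ hp]
    · -- k ≤ p*m+j, k ≠ j : coefficient is 0
      rw [coeff_expand hp, if_neg, ]
      intro hdvd
      have hd : (p : ℤ) ∣ ((p : ℤ) * m + j - k) := by
        have := Int.natCast_dvd_natCast.mpr hdvd
        rwa [Int.ofNat_sub h1] at this
        -- may need push_cast
      have hd2 : (p : ℤ) ∣ ((j : ℤ) - k) := by
        have : ((j : ℤ) - k) = ((p : ℤ) * m + j - k) - p * m := by ring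
        rw [this]
        exact dvd_sub hd ⟨m, rfl⟩
      have hjk : (j : ℤ) - k = 0 := by
        refine Int.eq_zero_of_abs_lt_dvd hd2 ?_
        have h3 : (j : ℕ) < p := lt_of_lt_of_le j.2 hn
        have h4 : (k : ℕ) < p := lt_of_lt_of_le k.2 hn
        rw [abs_sub_lt_iff]
        constructor <;> [skip; skip] <;> push_cast <;> omega
      exact h2 (Fin.ext (by omega) : k = j)
    · -- ¬ k ≤ p*m+j but k = j: impossible
      exact absurd (h2 ▸ Nat.le_add_left _ _) h1
    · rfl
  have := congrArg (fun q => Polynomial.coeff q (p * m + j)) hc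
  simp only [finset_sum_coeff, coeff_zero] at this
  rw [Finset.sum_congr rfl (fun k _ => key k), Finset.sum_ite_eq' Finset.univ j
    (fun _ => (c j).coeff m)] at this
  simpa using this

/-- The power basis vectors of `M F p`. -/
def pB (F : Type) [Field F] (p : ℕ) : Fin p → M F p := fun i => tP.symm (X ^ (i : ℕ))

lemma pB_indep (p : ℕ) (hp : 0 < p) : LinearIndependent F[X] (pB F p) := by
  rw [Fintype.linearIndependent_iff]
  intro c hc
  apply expand_indep p hp p le_rfl c
  have key : (∑ j : Fin p, expand F p (c j) * X ^ (j : ℕ)) = tP (∑ i, c i • pB F p i) := by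
    rw [map_sum]
    refine Finset.sum_congr rfl fun i _ => ?_
    rw [tP_smul]
    simp [pB]
  rw [key, hc, map_zero]

lemma pB_span (p : ℕ) (hp : 0 < p) :
    ⊤ ≤ Submodule.span F[X] (Set.range (pB F p)) := by
  rintro g -
  have : ∀ f : F[X], tP.symm f ∈ Submodule.span F[X] (Set.range (pB F p)) := by
    intro f
    induction f using Polynomial.induction_on' with
    | add a b ha hb =>
      rw [map_add]; exact Submodule.add_mem _ ha hb
    | monomial n a =>
      have hmem : pB F p ⟨n % p, Nat.mod_lt n hp⟩ ∈
          Set.range (pB F p) := Set.mem_range_self _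
      have hsp := Submodule.smul_mem (Submodule.span F[X] (Set.range (pB F p)))
        (monomial (n / p) a) (Submodule.subset_span hmem)
      convert hsp using 1
      apply tP.injective
      rw [tP_smul]
      simp only [pB, AddEquiv.apply_symm_apply, expand_monomial]
      rw [← C_mul_X_pow_eq_monomial, ← C_mul_X_pow_eq_monomial, mul_assoc, ← pow_add]
      congr 2
      rw [mul_comm, Nat.div_add_mod]
  have := this (tP g)
  simpa using this

/-- The basis of `M F p` over `F[X]` (acting via expand). -/
def basisM (p : ℕ) (hp : 0 < p) : Module.Basis (Fin p) F[X] (M F p) :=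
  Module.Basis.mk (pB_indep p hp) (pB_span p hp)

lemma sq_mem (p : ℕ) [CharP F p] (hp : 0 < p) (h : F[X]) (j : ℕ) (hj : j + 1 < p) :
    ∃ g : F[X], derivative g * h - derivative h * g = h ^ 2 * X ^ j := by
  have hne : ((j + 1 : ℕ) : F) ≠ 0 := by
    rw [Ne, CharP.cast_eq_zero_iff F p]
    exact Nat.not_dvd_of_pos_of_lt (Nat.succ_pos j) hj
  refine ⟨C (((j + 1 : ℕ) : F))⁻¹ * (X ^ (j + 1) * h), ?_⟩
  have hC : (C (((j + 1 : ℕ) : F))⁻¹ : F[X]) * C (((j + 1 : ℕ) : F)) = 1 := by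
    rw [← C_mul, inv_mul_cancel₀ hne, map_one]
  have e1 : derivative (C (((j + 1 : ℕ) : F))⁻¹ * (X ^ (j + 1) * h)) * h -
      derivative h * (C (((j + 1 : ℕ) : F))⁻¹ * (X ^ (j + 1) * h)) =
      (C (((j + 1 : ℕ) : F))⁻¹ * C (((j + 1 : ℕ) : F))) * (h ^ 2 * X ^ j) := by
    rw [derivative_mul, derivative_C, zero_mul, zero_add, derivative_mul, derivative_X_pow]
    simp only [Nat.add_sub_cancel]
    ring
  rw [e1, hC, one_mul]

theorem main (p : ℕ) (hp : 0 < p) (hcp : CharP F p) (h : F[X]) (hh : h ≠ 0) :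
    ∃ b : Fin (p-1) → F[X],
      (∀ i, ∃ g, b i = derivative g * h - derivative h * g) ∧
      (∀ g : F[X], ∃ c : Fin (p-1) → F[X],
        derivative g * h - derivative h * g = ∑ i, expand F p (c i) * b i) ∧
      (∀ c : Fin (p-1) → F[X], ∑ i, expand F p (c i) * b i = 0 → ∀ i, c i = 0) := by
  haveI := hcp
  set B := basisM (F := F) p hp with hB
  set κ := kappa (F := F) p hp h with hκ
  set N := LinearMap.range κ with hN
  obtain ⟨n, bN⟩ := Submodule.basisOfPid B N
  choose g hg using fun i : Fin n => LinearMap.mem_range.mp (bN i).2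
  have hbM : LinearIndependent F[X] (fun i : Fin n => (bN i : M F p)) :=
    bN.linearIndependent.map' N.subtype N.ker_subtype
  -- upper bound : n + 1 ≤ p
  have hindep : LinearIndependent F[X] (Fin.snoc g (tP.symm h) : Fin (n+1) → M F p) := by
    rw [Fintype.linearIndependent_iff]
    intro c hc
    have h1 : ∑ i : Fin n, c i.castSucc • ((bN i : M F p)) = 0 := by
      have h2 := congrArg κ hc
      rw [map_sum, map_zero, Fin.sum_univ_castSucc] at h2
      simp only [Fin.snoc_castSucc, Fin.snoc_last, map_smul] at h2
      rw [hκ, kappa_h p hp h, smul_zero, add_zero] at h2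
      simpa [← hκ, hg] using h2
    have hcz : ∀ i : Fin n, c i.castSucc = 0 :=
      Fintype.linearIndependent_iff.mp hbM _ h1
    have hlast : c (Fin.last n) • (tP.symm h : M F p) = 0 := by
      rw [Fin.sum_univ_castSucc] at hc
      simp only [Fin.snoc_castSucc, Fin.snoc_last] at hc
      have : ∑ i : Fin n, c i.castSucc • (Fin.snoc g (tP.symm h) : Fin (n+1) → M F p) i.castSucc
          = (0 : M F p) := by
        refine Finset.sum_eq_zero fun i _ => ?_
        rw [hcz i, zero_smul]
      simp only [Fin.snoc_castSucc] at this
      rw [this, zero_add] at hc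
      exact hc
    have hel : expand F p (c (Fin.last n)) * h = 0 := by
      have h3 := congrArg tP hlast
      rw [tP_smul, map_zero] at h3
      simpa using h3
    have hcl : c (Fin.last n) = 0 := by
      rcases mul_eq_zero.mp hel with h0 | h0
      · exact (expand_eq_zero hp).mp h0
      · exact absurd h0 hh
    intro i
    refine Fin.lastCases hcl hcz i
  have hub : n + 1 ≤ p := by
    simpa using B.card_le_card_of_linearIndependent hindep
  -- lower bound : p - 1 ≤ n
  have hmem : ∀ j : Fin (p-1), (tP.symm (h^2 * X^(j:ℕ)) : M F p) ∈ N := by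
    intro j
    obtain ⟨g0, hg0⟩ := sq_mem p hp h (j : ℕ) (by have := j.2; omega)
    refine ⟨tP.symm g0, ?_⟩
    apply tP.injective
    rw [hκ, tP_kappa]
    simpa using hg0
  have hw : LinearIndependent F[X]
      (fun j : Fin (p-1) => (⟨tP.symm (h^2 * X^(j:ℕ)), hmem j⟩ : N)) := by
    apply LinearIndependent.of_comp N.subtype
    rw [Fintype.linearIndependent_iff]
    intro c hc
    have hps : h^2 * (∑ j : Fin (p-1), expand F p (c j) * X^(j:ℕ)) = 0 := by
      have h4 := congrArg tP hc
      rw [map_sum, map_zero] at h4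
      rw [Finset.mul_sum, ← h4]
      refine Finset.sum_congr rfl fun j _ => ?_
      simp only [Function.comp_apply, Submodule.coe_subtype, tP_smul]
      simp only [AddEquiv.apply_symm_apply]
      ring
    have hzero : (∑ j : Fin (p-1), expand F p (c j) * X^(j:ℕ)) = 0 := by
      rcases mul_eq_zero.mp hps with h0 | h0
      · exact absurd h0 (pow_ne_zero 2 hh)
      · exact h0
    exact expand_indep p hp (p-1) (Nat.sub_le p 1) c hzero
  have hlb : p - 1 ≤ n := by
    simpa using bN.card_le_card_of_linearIndependent hw
  have hn : n = p - 1 := by omega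
  subst hn
  refine ⟨fun i => tP ((bN i : M F p)), ?_, ?_, ?_⟩
  · intro i
    obtain ⟨g0, hg0⟩ := LinearMap.mem_range.mp (bN i).2
    refine ⟨tP g0, ?_⟩
    show tP ((bN i : M F p)) = _
    rw [← hg0, hκ, tP_kappa]
  · intro f
    set x : N := ⟨κ (tP.symm f), LinearMap.mem_range_self κ _⟩ with hx
    refine ⟨fun i => bN.repr x i, ?_⟩
    have step1 : derivative f * h - derivative h * f = tP ((x : M F p)) := by
      show derivative f * h - derivative h * f = tP (κ (tP.symm f))
      rw [hκ, tP_kappa]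
      simp
    rw [step1]
    conv_lhs => rw [← bN.sum_repr x]
    rw [Submodule.coe_sum, map_sum]
    refine Finset.sum_congr rfl fun i _ => ?_
    rw [Submodule.coe_smul, tP_smul]
  · intro c hc i
    refine Fintype.linearIndependent_iff.mp hbM c ?_ i
    apply tP.injective
    have : tP (∑ i : Fin (p-1), c i • (bN i : M F p))
        = ∑ i : Fin (p-1), expand F p (c i) * tP ((bN i : M F p)) := by
      rw [map_sum]
      exact Finset.sum_congr rfl fun i _ => tP_smul _ _
    rw [this, hc, map_zero]

end Stmt11

variable (F : Type) [Field F]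

/-- in characteristic `p > 0`, the image of the `F[x^p]`-linear
map `κ(g) = g'·h − h'·g` is a free `F[x^p]`-submodule of `F[x]` of rank `p − 1`:
it has a basis `b : Fin (p−1) → F[x]` (its elements lie in the image, they span
the image over `F[x^p]`, and they are `F[x^p]`-linearly independent). -/
theorem statement11 (p : ℕ) (hp : 0 < p) (hcp : CharP F p) (h : F[X]) (hh : h ≠ 0) :
    ∃ b : Fin (p-1) → F[X],
      (∀ i, ∃ g, b i = derivative g * h - derivative h * g) ∧
      (∀ g : F[X], ∃ c : Fin (p-1) → F[X],
        derivative g * h - derivative h * g = ∑ i, expand F p (c i) * b i) ∧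
      (∀ c : Fin (p-1) → F[X], ∑ i, expand F p (c i) * b i = 0 → ∀ i, c i = 0) :=
  Stmt11.main p hp hcp h hh
end
end

section
/- Assume char F = 0. For all g ∈ F[x] and all integers n ≥ 1: (a) [g(x)·a_n, x] = n·(π_h·g)(x)·h(x)^{n−1}·y^{n−1}, and moreover [g(x)·a_n, x] − n·(π_h·g)(x)·ŷ^{n−1} ∈ gcd(h, h')(x)·A_h; (b) [g(x)·a_n, ŷ] + δ₀(g)(x)·ŷ^n ∈ gcd(h, h')(x)·A_h; (c) for every p ∈ F[x] and every integer k ≥ 0, [g(x)·a_n, p(x)·ŷ^k] − (n·π_h·g·p' − k·p·δ₀(g))(x)·ŷ^{n+k−1} ∈ gcd(h, h')(x)·A_h. -/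
open Polynomial TensorProduct
open scoped Classical

noncomputable section

variable (F : Type) [Field F]

/-- `π_h = h / gcd(h, h')`. -/
def pih (h : F[X]) : F[X] := h / mgcd F h (derivative h)

/-- `δ₀(g) = (g·π_h)' − g·(h'/gcd(h, h'))`. -/
def delta0 (h g : F[X]) : F[X] :=
  derivative (g * pih F h) - g * (derivative h / mgcd F h (derivative h))

/-- `a_n = π_h(x)·h(x)^{n−1}·y^n ∈ A₁`. -/
def aelem (h : F[X]) (n : ℕ) : Weyl F :=
  aeval (wx F) (pih F h) * (aeval (wx F) h) ^ (n - 1) * wy F ^ n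

namespace S16

variable {F : Type} [Field F]

/-- shorthand for evaluation of a polynomial at `wx`. -/
def ev (F : Type) [Field F] (p : F[X]) : Weyl F := aeval (wx F) p

lemma ev_mul (p q : F[X]) : ev F (p * q) = ev F p * ev F q := map_mul _ _ _

lemma ev_comm (p q : F[X]) : ev F p * ev F q = ev F q * ev F p := by
  rw [← ev_mul, ← ev_mul, mul_comm]

lemma ev_pow (p : F[X]) (n : ℕ) : ev F (p ^ n) = ev F p ^ n := map_pow _ _ _

lemma wx_wy : wy F * wx F = wx F * wy F + 1 := by
  have := RingQuot.mkAlgHom_rel F (WeylRel.rel (F := F))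
  simpa [wx, wy, map_mul, map_add, map_one] using this

lemma wy_wx_pow (n : ℕ) : wy F * wx F ^ n = wx F ^ n * wy F + n • wx F ^ (n - 1) := by
  induction n with
  | zero => simp
  | succ n ih =>
    have h1 : wy F * wx F ^ (n + 1) = (wy F * wx F ^ n) * wx F := by
      rw [pow_succ, mul_assoc]
    rw [h1, ih, add_mul, mul_assoc, wx_wy, smul_mul_assoc]
    cases n with
    | zero => simp [pow_succ]
    | succ m =>
      have h2 : wx F ^ (m + 1 - 1) * wx F = wx F ^ (m + 1) := by
        rw [Nat.add_sub_cancel, pow_succ]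
      rw [h2, Nat.add_sub_cancel, mul_add, mul_one, ← mul_assoc, ← pow_succ]
      conv_rhs => rw [succ_nsmul]
      abel

lemma wy_ev (p : F[X]) :
    wy F * ev F p = ev F p * wy F + ev F (derivative p) := by
  induction p using Polynomial.induction_on' with
  | add p q hp hq =>
    simp only [ev, map_add, derivative_add, mul_add, add_mul] at *
    rw [hp, hq]; abel
  | monomial n a =>
    simp only [ev, aeval_monomial, derivative_monomial, map_mul, map_natCast]
    rw [← mul_assoc, ← Algebra.commutes a (wy F), mul_assoc, wy_wx_pow, mul_add, nsmul_eq_mul,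
      ← mul_assoc, ← mul_assoc]

end S16
namespace S16
variable {F : Type} [Field F]

/-- `ŷ = y·h(x)`. -/
def yh (F : Type) [Field F] (h : F[X]) : Weyl F := wy F * ev F h

lemma wy_pow_wx (n : ℕ) : wy F ^ n * wx F = wx F * wy F ^ n + n • wy F ^ (n - 1) := by
  induction n with
  | zero => simp
  | succ n ih =>
    have h1 : wy F ^ (n + 1) * wx F = wy F ^ n * (wy F * wx F) := by
      rw [pow_succ, mul_assoc]
    rw [h1, wx_wy, mul_add, mul_one, ← mul_assoc, ih, add_mul, smul_mul_assoc]
    cases n with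
    | zero => simp
    | succ m =>
      have h2 : wy F ^ (m + 1 - 1) * wy F = wy F ^ (m + 1) := by
        rw [Nat.add_sub_cancel, pow_succ]
      rw [h2, Nat.add_sub_cancel, mul_assoc, ← pow_succ]
      conv_rhs => rw [succ_nsmul]
      abel

lemma ev_wy (p : F[X]) :
    ev F p * wy F = wy F * ev F p - ev F (derivative p) := by
  rw [wy_ev]; abel

lemma wx_ev (p : F[X]) : wx F * ev F p = ev F p * wx F := by
  have : wx F = ev F X := by simp [ev]
  rw [this, ev_comm]

lemma yh_ev (h p : F[X]) :
    yh F h * ev F p = ev F p * yh F h + ev F (h * derivative p) := by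
  have e1 : yh F h * ev F p = ev F (h * p) * wy F + ev F (derivative (h * p)) := by
    rw [yh, mul_assoc, ← ev_mul, wy_ev]
  have e2 : ev F p * yh F h
      = ev F (h * p) * wy F + ev F (derivative (h * p)) - ev F (derivative p * h) := by
    rw [yh, ← mul_assoc, ev_wy, sub_mul, mul_assoc, ← ev_mul, ← ev_mul, wy_ev, mul_comm p h]
  rw [e1, e2, mul_comm (derivative p) h]
  abel

section Poly
variable (h : F[X])

lemma mem_wx : wx F ∈ Ah F h := Algebra.subset_adjoin (by simp)

lemma mem_yh : yh F h ∈ Ah F h := Algebra.subset_adjoin (by simp [yh, ev])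

lemma mem_ev (p : F[X]) : ev F p ∈ Ah F h := by
  have h1 : ev F p ∈ Algebra.adjoin F {wx F} := Polynomial.aeval_mem_adjoin_singleton F (wx F)
  exact Algebra.adjoin_mono (Set.singleton_subset_iff.mpr (by simp)) h1

lemma mgcd_ne (hh : h ≠ 0) : mgcd F h (derivative h) ≠ 0 := by
  intro e
  rw [mgcd, normalize_eq_zero, EuclideanDomain.gcd_eq_zero_iff] at e
  exact hh e.1

lemma mgcd_dvd : mgcd F h (derivative h) ∣ h :=
  normalize_dvd_iff.mpr (EuclideanDomain.gcd_dvd_left _ _)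

lemma mgcd_dvd' : mgcd F h (derivative h) ∣ derivative h :=
  normalize_dvd_iff.mpr (EuclideanDomain.gcd_dvd_right _ _)

lemma h_fac (hh : h ≠ 0) : h = mgcd F h (derivative h) * pih F h :=
  (EuclideanDomain.mul_div_cancel' (mgcd_ne h hh) (mgcd_dvd h)).symm

lemma h'_fac (hh : h ≠ 0) : derivative h = mgcd F h (derivative h) * (derivative h / mgcd F h (derivative h)) :=
  (EuclideanDomain.mul_div_cancel' (mgcd_ne h hh) (mgcd_dvd' h)).symm

end Poly

section EE
variable (h : F[X])

/-- membership in `gcd(h,h')(x)·A_h`. -/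
def EE (a : Weyl F) : Prop :=
  ∃ c ∈ Ah F h, a = ev F (mgcd F h (derivative h)) * c

lemma EE.zero : EE h (0 : Weyl F) := ⟨0, zero_mem _, by simp⟩

lemma EE.basic {c : Weyl F} (hc : c ∈ Ah F h) : EE h (ev F (mgcd F h (derivative h)) * c) :=
  ⟨c, hc, rfl⟩

lemma EE.add {a b : Weyl F} (ha : EE h a) (hb : EE h b) : EE h (a + b) := by
  obtain ⟨c, hc, rfl⟩ := ha; obtain ⟨d, hd, rfl⟩ := hb
  exact ⟨c + d, add_mem hc hd, by rw [mul_add]⟩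

lemma EE.neg {a : Weyl F} (ha : EE h a) : EE h (-a) := by
  obtain ⟨c, hc, rfl⟩ := ha
  refine ⟨-c, neg_mem hc, ?_⟩
  exact (mul_neg (ev F (mgcd F h (derivative h))) c).symm

lemma EE.sub {a b : Weyl F} (ha : EE h a) (hb : EE h b) : EE h (a - b) := by
  rw [sub_eq_add_neg]; exact ha.add _ hb.neg

lemma EE.nsmul {a : Weyl F} (n : ℕ) (ha : EE h a) : EE h (n • a) := by
  obtain ⟨c, hc, rfl⟩ := ha
  exact ⟨n • c, nsmul_mem hc n, by rw [mul_smul_comm]⟩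

lemma EE.pmul {a : Weyl F} (q : F[X]) (ha : EE h a) : EE h (ev F q * a) := by
  obtain ⟨c, hc, rfl⟩ := ha
  exact ⟨ev F q * c, mul_mem (mem_ev h q) hc, by rw [← mul_assoc, ev_comm, mul_assoc]⟩

lemma EE.mul_right {a b : Weyl F} (hb : b ∈ Ah F h) (ha : EE h a) : EE h (a * b) := by
  obtain ⟨c, hc, rfl⟩ := ha
  exact ⟨c * b, mul_mem hc hb, by rw [mul_assoc]⟩

lemma EE.of_dvd {q : F[X]} (hq : mgcd F h (derivative h) ∣ q) {c : Weyl F}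
    (hc : c ∈ Ah F h) : EE h (ev F q * c) := by
  obtain ⟨r, rfl⟩ := hq
  exact ⟨ev F r * c, mul_mem (mem_ev h r) hc, by rw [S16.ev_mul, mul_assoc]⟩

lemma EE.yh_mul (hh : h ≠ 0) {a : Weyl F} (ha : EE h a) : EE h (yh F h * a) := by
  obtain ⟨c, hc, rfl⟩ := ha
  have hp : h * derivative (mgcd F h (derivative h))
      = mgcd F h (derivative h) * (pih F h * derivative (mgcd F h (derivative h))) := by
    nth_rewrite 1 [h_fac h hh]
    ring
  refine ⟨yh F h * c + ev F (pih F h * derivative (mgcd F h (derivative h))) * c,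
    add_mem (mul_mem (mem_yh h) hc) (mul_mem (mem_ev h _) hc), ?_⟩
  rw [← mul_assoc, yh_ev, hp, S16.ev_mul]
  noncomm_ring

end EE
end S16
namespace S16
variable {F : Type} [Field F]

/-- `τ = h'/gcd(h,h')`. -/
def tth (F : Type) [Field F] (h : F[X]) : F[X] := derivative h / mgcd F h (derivative h)

lemma h'_fac' (h : F[X]) (hh : h ≠ 0) :
    mgcd F h (derivative h) * tth F h = derivative h := (h'_fac h hh).symm

lemma dpow (h : F[X]) (hh : h ≠ 0) (m : ℕ) :
    derivative (h ^ (m + 1))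
      = (C ((m + 1 : ℕ) : F) * (mgcd F h (derivative h) * tth F h)) * h ^ m := by
  rw [derivative_pow, Nat.add_sub_cancel, h'_fac' h hh]
  ring

lemma dvd_dpow (h : F[X]) (m : ℕ) :
    mgcd F h (derivative h) ∣ C ((m + 1 : ℕ) : F) * (mgcd F h (derivative h) * tth F h) :=
  ⟨C ((m + 1 : ℕ) : F) * tth F h, by ring⟩

/-- M1: `h(x)^m y^m ≡ ŷ^m  mod  gcd(h,h')(x)·A_h`. -/
lemma pow_diff (h : F[X]) (hh : h ≠ 0) (m : ℕ) :
    EE h (ev F h ^ m * wy F ^ m - yh F h ^ m) := by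
  induction m with
  | zero => simpa using EE.zero h
  | succ m ih =>
    obtain ⟨c, hc, hc'⟩ := ih
    have hrw : ev F h ^ m * wy F ^ m = yh F h ^ m + ev F (mgcd F h (derivative h)) * c := by
      rw [← hc']; abel
    have hmem : yh F h ^ m + ev F (mgcd F h (derivative h)) * c ∈ Ah F h :=
      add_mem (pow_mem (mem_yh h) m) (mul_mem (mem_ev h _) hc)
    have e1 : ev F h ^ (m + 1) * wy F ^ (m + 1)
        = (ev F (h ^ (m + 1)) * wy F) * wy F ^ m := by
      rw [ev_pow, pow_succ' (wy F) m, ← mul_assoc]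
    have e2 : wy F * ev F (h ^ (m + 1)) * wy F ^ m
        = yh F h * (ev F h ^ m * wy F ^ m) := by
      rw [yh, ev_pow, pow_succ' (ev F h) m, ← mul_assoc (wy F) (ev F h) (ev F h ^ m),
        mul_assoc (wy F * ev F h)]
    have e3 : ev F (derivative (h ^ (m + 1))) * wy F ^ m
        = ev F (C ((m + 1 : ℕ) : F) * (mgcd F h (derivative h) * tth F h))
            * (ev F h ^ m * wy F ^ m) := by
      rw [dpow h hh, S16.ev_mul, ev_pow, mul_assoc]
    have key : ev F h ^ (m + 1) * wy F ^ (m + 1) - yh F h ^ (m + 1)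
        = yh F h * (ev F (mgcd F h (derivative h)) * c)
          - ev F (C ((m + 1 : ℕ) : F) * (mgcd F h (derivative h) * tth F h))
              * (yh F h ^ m + ev F (mgcd F h (derivative h)) * c) := by
      have e4 : ev F h ^ (m + 1) * wy F ^ (m + 1)
          = yh F h * (yh F h ^ m + ev F (mgcd F h (derivative h)) * c)
            - ev F (C ((m + 1 : ℕ) : F) * (mgcd F h (derivative h) * tth F h))
                * (yh F h ^ m + ev F (mgcd F h (derivative h)) * c) := by
        rw [e1, ev_wy, sub_mul, e2, e3, hrw]
      rw [e4, mul_add (yh F h), ← pow_succ']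
      abel
    rw [key]
    exact EE.sub h ((EE.basic h hc).yh_mul h hh) (EE.of_dvd h (dvd_dpow h m) hmem)

end S16
namespace S16
variable {F : Type} [Field F]

lemma yh_def (h : F[X]) : yh F h = wy F * ev F h := rfl

lemma dpih (h : F[X]) (hh : h ≠ 0) (m : ℕ) :
    derivative (pih F h * h ^ (m + 1))
      = mgcd F h (derivative h)
          * ((derivative (pih F h) + C ((m + 1 : ℕ) : F) * tth F h) * (pih F h * h ^ m)) := by
  have hx : h ^ (m + 1) = mgcd F h (derivative h) * pih F h * h ^ m := by
    rw [pow_succ']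
    nth_rewrite 1 [h_fac h hh]
    ring
  rw [derivative_mul, dpow h hh m, hx]
  ring

/-- Lemma A: `π h^m [y^{m+1}, p] ≡ (m+1) (π p') ŷ^m  mod gcd·A_h`. -/
lemma commA (h : F[X]) (hh : h ≠ 0) (p : F[X]) (m : ℕ) :
    EE h (ev F (pih F h) * ev F h ^ m * (wy F ^ (m + 1) * ev F p - ev F p * wy F ^ (m + 1))
      - (m + 1) • (ev F (pih F h * derivative p) * yh F h ^ m)) := by
  induction m with
  | zero =>
    have e : wy F ^ 1 * ev F p - ev F p * wy F ^ 1 = ev F (derivative p) := by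
      rw [pow_one, wy_ev]; abel
    rw [e, pow_zero, pow_zero, mul_one, one_nsmul, mul_one, ← S16.ev_mul, sub_self]
    exact EE.zero h
  | succ m ih =>
    obtain ⟨c, hc, hc'⟩ := ih
    obtain ⟨c₂, hc₂, hc₂'⟩ := pow_diff h hh (m + 1)
    set Cm := wy F ^ (m + 1) * ev F p - ev F p * wy F ^ (m + 1) with hCm
    have hrw : ev F (pih F h) * ev F h ^ m * Cm
        = (m + 1) • (ev F (pih F h * derivative p) * yh F h ^ m)
          + ev F (mgcd F h (derivative h)) * c := by
      rw [← hc']; abel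
    have hrw2 : ev F h ^ (m + 1) * wy F ^ (m + 1)
        = yh F h ^ (m + 1) + ev F (mgcd F h (derivative h)) * c₂ := by
      rw [← hc₂']; abel
    have hZmem : (m + 1) • (ev F (pih F h * derivative p) * yh F h ^ m)
        + ev F (mgcd F h (derivative h)) * c ∈ Ah F h :=
      add_mem (nsmul_mem (mul_mem (mem_ev h _) (pow_mem (mem_yh h) m)) _)
        (mul_mem (mem_ev h _) hc)
    have e_c : wy F ^ (m + 1 + 1) * ev F p - ev F p * wy F ^ (m + 1 + 1)
        = wy F * Cm + ev F (derivative p) * wy F ^ (m + 1) := by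
      rw [hCm, mul_sub, ← mul_assoc, ← pow_succ' (wy F) (m + 1), ← mul_assoc, wy_ev, add_mul,
        mul_assoc (ev F p), ← pow_succ' (wy F) (m + 1)]
      abel
    -- second piece
    have t1 : ev F (pih F h) * ev F h ^ (m + 1) * (ev F (derivative p) * wy F ^ (m + 1))
        = ev F (pih F h * derivative p) * (ev F h ^ (m + 1) * wy F ^ (m + 1)) := by
      rw [← ev_pow, mul_assoc (ev F (pih F h)), ← mul_assoc (ev F (h ^ (m + 1))),
        ev_comm (h ^ (m + 1)) (derivative p), mul_assoc (ev F (derivative p)),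
        ← mul_assoc (ev F (pih F h)), ← S16.ev_mul]
    have key2 : ev F (pih F h) * ev F h ^ (m + 1) * (ev F (derivative p) * wy F ^ (m + 1))
        - ev F (pih F h * derivative p) * yh F h ^ (m + 1)
        = ev F (pih F h * derivative p) * (ev F (mgcd F h (derivative h)) * c₂) := by
      rw [t1, hrw2, mul_add]; abel
    -- first piece
    have hpoly1 : pih F h * h ^ (m + 1) = h * (pih F h * h ^ m) := by ring
    have t2 : ev F (pih F h) * ev F h ^ (m + 1) * (wy F * Cm)
        = (ev F (pih F h * h ^ (m + 1)) * wy F) * Cm := by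
      rw [S16.ev_mul, ev_pow]; noncomm_ring
    have t4 : wy F * ev F (pih F h * h ^ (m + 1)) * Cm
        = yh F h * ((m + 1) • (ev F (pih F h * derivative p) * yh F h ^ m)
            + ev F (mgcd F h (derivative h)) * c) := by
      rw [hpoly1, S16.ev_mul, ← mul_assoc, ← yh_def, S16.ev_mul, ev_pow, mul_assoc (yh F h),
        hrw]
    have t5a : yh F h * (ev F (pih F h * derivative p) * yh F h ^ m)
        = ev F (pih F h * derivative p) * yh F h ^ (m + 1)
          + ev F (h * derivative (pih F h * derivative p)) * yh F h ^ m := by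
      rw [← mul_assoc, yh_ev, add_mul, mul_assoc, ← pow_succ']
    have t5 : yh F h * ((m + 1) • (ev F (pih F h * derivative p) * yh F h ^ m)
            + ev F (mgcd F h (derivative h)) * c)
        = (m + 1) • (ev F (pih F h * derivative p) * yh F h ^ (m + 1))
          + (m + 1) • (ev F (h * derivative (pih F h * derivative p)) * yh F h ^ m)
          + yh F h * (ev F (mgcd F h (derivative h)) * c) := by
      rw [mul_add, mul_smul_comm, t5a, smul_add]
    have t6 : ev F (derivative (pih F h * h ^ (m + 1))) * Cm
        = ev F (mgcd F h (derivative h))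
            * (ev F (derivative (pih F h) + C ((m + 1 : ℕ) : F) * tth F h)
              * ((m + 1) • (ev F (pih F h * derivative p) * yh F h ^ m)
                + ev F (mgcd F h (derivative h)) * c)) := by
      rw [dpih h hh m, S16.ev_mul, S16.ev_mul, S16.ev_mul, ev_pow,
        mul_assoc (ev F (mgcd F h (derivative h))), mul_assoc
          (ev F (derivative (pih F h) + C ((m + 1 : ℕ) : F) * tth F h)), hrw]
    have key1 : ev F (pih F h) * ev F h ^ (m + 1) * (wy F * Cm)
        - (m + 1) • (ev F (pih F h * derivative p) * yh F h ^ (m + 1))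
        = (m + 1) • (ev F (h * derivative (pih F h * derivative p)) * yh F h ^ m)
          + yh F h * (ev F (mgcd F h (derivative h)) * c)
          - ev F (mgcd F h (derivative h))
              * (ev F (derivative (pih F h) + C ((m + 1 : ℕ) : F) * tth F h)
                * ((m + 1) • (ev F (pih F h * derivative p) * yh F h ^ m)
                  + ev F (mgcd F h (derivative h)) * c)) := by
      rw [t2, ev_wy, sub_mul, t4, t5, ← t6]
      abel
    have key0 : ev F (pih F h) * ev F h ^ (m + 1)
          * (wy F ^ (m + 1 + 1) * ev F p - ev F p * wy F ^ (m + 1 + 1))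
        - (m + 1 + 1) • (ev F (pih F h * derivative p) * yh F h ^ (m + 1))
        = (ev F (pih F h) * ev F h ^ (m + 1) * (wy F * Cm)
            - (m + 1) • (ev F (pih F h * derivative p) * yh F h ^ (m + 1)))
          + (ev F (pih F h) * ev F h ^ (m + 1) * (ev F (derivative p) * wy F ^ (m + 1))
            - ev F (pih F h * derivative p) * yh F h ^ (m + 1)) := by
      rw [e_c, mul_add, succ_nsmul]
      abel
    rw [key0, key1, key2]
    refine EE.add h (EE.sub h (EE.add h ?_ ?_) ?_) ?_
    · exact EE.nsmul h _ (EE.of_dvd h (Dvd.dvd.mul_right (mgcd_dvd h) _)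
        (pow_mem (mem_yh h) m))
    · exact (EE.basic h hc).yh_mul h hh
    · exact EE.basic h (mul_mem (mem_ev h _) hZmem)
    · exact EE.pmul h _ (EE.basic h hc₂)

end S16
namespace S16
variable {F : Type} [Field F]

lemma tth_def (h : F[X]) : tth F h = derivative h / mgcd F h (derivative h) := rfl

lemma EE.poly (h : F[X]) {q : F[X]} (hq : mgcd F h (derivative h) ∣ q) : EE h (ev F q) := by
  simpa using EE.of_dvd h hq (one_mem (Ah F h))

lemma pih_dh (h : F[X]) (hh : h ≠ 0) : pih F h * derivative h = h * tth F h := by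
  rw [← h'_fac' h hh,
    show h * tth F h = mgcd F h (derivative h) * pih F h * tth F h from by rw [← h_fac h hh]]
  ring

/-- Lemma B: `π h^m [y^{m+2}, h] ≡ (m+2) τ ŷ^{m+1}  mod gcd·A_h`. -/
lemma commB (h : F[X]) (hh : h ≠ 0) (m : ℕ) :
    EE h (ev F (pih F h) * ev F h ^ m
        * (wy F ^ (m + 2) * ev F h - ev F h * wy F ^ (m + 2))
      - (m + 2) • (ev F (tth F h) * yh F h ^ (m + 1))) := by
  induction m with
  | zero =>
    have b1 : wy F ^ (0 + 2) * ev F h - ev F h * wy F ^ (0 + 2)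
        = wy F * ev F (derivative h) + ev F (derivative h) * wy F := by
      rw [show (0 + 2 : ℕ) = 2 from rfl, pow_two, mul_assoc, wy_ev, mul_add, ← mul_assoc,
        wy_ev, ← mul_assoc, add_mul, mul_assoc (ev F h)]
      abel
    have b2 : ev F (pih F h) * (wy F * ev F (derivative h))
        = ev F (tth F h) * yh F h + ev F (h * derivative (tth F h))
          - ev F (derivative (pih F h) * derivative h) := by
      rw [← mul_assoc, ev_wy, sub_mul, mul_assoc, ← S16.ev_mul, ← S16.ev_mul, pih_dh h hh,
        S16.ev_mul, ← mul_assoc, ← yh_def, yh_ev]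
    have b3 : ev F (pih F h) * (ev F (derivative h) * wy F)
        = ev F (tth F h) * yh F h + ev F (h * derivative (tth F h))
          - ev F (derivative (h * tth F h)) := by
      rw [← mul_assoc, ← S16.ev_mul, pih_dh h hh, ev_wy, S16.ev_mul, ← mul_assoc, ← yh_def,
        yh_ev]
    have key : ev F (pih F h) * ev F h ^ 0
          * (wy F ^ (0 + 2) * ev F h - ev F h * wy F ^ (0 + 2))
        - (0 + 2) • (ev F (tth F h) * yh F h ^ (0 + 1))
        = (ev F (h * derivative (tth F h)) - ev F (derivative (pih F h) * derivative h))
          + (ev F (h * derivative (tth F h)) - ev F (derivative (h * tth F h))) := by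
      rw [b1, pow_zero, mul_one, mul_add, b2, b3, pow_one, zero_add, two_nsmul]
      abel
    rw [key]
    refine EE.add h (EE.sub h ?_ ?_) (EE.sub h ?_ ?_)
    · exact EE.poly h (Dvd.dvd.mul_right (mgcd_dvd h) _)
    · exact EE.poly h (Dvd.dvd.mul_left (mgcd_dvd' h) _)
    · exact EE.poly h (Dvd.dvd.mul_right (mgcd_dvd h) _)
    · rw [derivative_mul]
      exact EE.poly h (dvd_add (Dvd.dvd.mul_right (mgcd_dvd' h) _)
        (Dvd.dvd.mul_right (mgcd_dvd h) _))
  | succ m ih =>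
    simp only [show m + 1 + 2 = m + 2 + 1 from rfl, show m + 1 + 1 = m + 2 from rfl]
    obtain ⟨c, hc, hc'⟩ := ih
    obtain ⟨c₂, hc₂, hc₂'⟩ := pow_diff h hh (m + 2)
    set Cm := wy F ^ (m + 2) * ev F h - ev F h * wy F ^ (m + 2) with hCm
    have hrw : ev F (pih F h) * ev F h ^ m * Cm
        = (m + 2) • (ev F (tth F h) * yh F h ^ (m + 1))
          + ev F (mgcd F h (derivative h)) * c := by
      rw [← hc']; abel
    have hrw2 : ev F h ^ (m + 2) * wy F ^ (m + 2)
        = yh F h ^ (m + 2) + ev F (mgcd F h (derivative h)) * c₂ := by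
      rw [← hc₂']; abel
    have hZmem : (m + 2) • (ev F (tth F h) * yh F h ^ (m + 1))
        + ev F (mgcd F h (derivative h)) * c ∈ Ah F h :=
      add_mem (nsmul_mem (mul_mem (mem_ev h _) (pow_mem (mem_yh h) _)) _)
        (mul_mem (mem_ev h _) hc)
    have e_c : wy F ^ (m + 2 + 1) * ev F h - ev F h * wy F ^ (m + 2 + 1)
        = wy F * Cm + ev F (derivative h) * wy F ^ (m + 2) := by
      rw [hCm, mul_sub, ← mul_assoc, ← pow_succ' (wy F) (m + 2), ← mul_assoc, wy_ev, add_mul,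
        mul_assoc (ev F h), ← pow_succ' (wy F) (m + 2)]
      abel
    -- second piece
    have hp2 : pih F h * h ^ (m + 1) * derivative h = tth F h * h ^ (m + 2) := by
      rw [mul_right_comm, pih_dh h hh]
      ring
    have t1 : ev F (pih F h) * ev F h ^ (m + 1) * (ev F (derivative h) * wy F ^ (m + 2))
        = ev F (tth F h) * (ev F h ^ (m + 2) * wy F ^ (m + 2)) := by
      rw [← ev_pow, ← ev_pow, ← S16.ev_mul, ← mul_assoc, ← S16.ev_mul, hp2, S16.ev_mul,
        mul_assoc]
    have key2 : ev F (pih F h) * ev F h ^ (m + 1) * (ev F (derivative h) * wy F ^ (m + 2))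
        - ev F (tth F h) * yh F h ^ (m + 2)
        = ev F (tth F h) * (ev F (mgcd F h (derivative h)) * c₂) := by
      rw [t1, hrw2, mul_add]; abel
    -- first piece
    have hpoly1 : pih F h * h ^ (m + 1) = h * (pih F h * h ^ m) := by ring
    have t2 : ev F (pih F h) * ev F h ^ (m + 1) * (wy F * Cm)
        = (ev F (pih F h * h ^ (m + 1)) * wy F) * Cm := by
      rw [S16.ev_mul, ev_pow]; noncomm_ring
    have t4 : wy F * ev F (pih F h * h ^ (m + 1)) * Cm
        = yh F h * ((m + 2) • (ev F (tth F h) * yh F h ^ (m + 1))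
            + ev F (mgcd F h (derivative h)) * c) := by
      rw [hpoly1, S16.ev_mul, ← mul_assoc, ← yh_def, S16.ev_mul, ev_pow, mul_assoc (yh F h),
        hrw]
    have t5a : yh F h * (ev F (tth F h) * yh F h ^ (m + 1))
        = ev F (tth F h) * yh F h ^ (m + 2)
          + ev F (h * derivative (tth F h)) * yh F h ^ (m + 1) := by
      rw [← mul_assoc, yh_ev, add_mul, mul_assoc, ← pow_succ']
    have t5 : yh F h * ((m + 2) • (ev F (tth F h) * yh F h ^ (m + 1))
            + ev F (mgcd F h (derivative h)) * c)
        = (m + 2) • (ev F (tth F h) * yh F h ^ (m + 2))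
          + (m + 2) • (ev F (h * derivative (tth F h)) * yh F h ^ (m + 1))
          + yh F h * (ev F (mgcd F h (derivative h)) * c) := by
      rw [mul_add, mul_smul_comm, t5a, smul_add]
    have t6 : ev F (derivative (pih F h * h ^ (m + 1))) * Cm
        = ev F (mgcd F h (derivative h))
            * (ev F (derivative (pih F h) + C ((m + 1 : ℕ) : F) * tth F h)
              * ((m + 2) • (ev F (tth F h) * yh F h ^ (m + 1))
                + ev F (mgcd F h (derivative h)) * c)) := by
      rw [dpih h hh m, S16.ev_mul, S16.ev_mul, S16.ev_mul, ev_pow,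
        mul_assoc (ev F (mgcd F h (derivative h))), mul_assoc
          (ev F (derivative (pih F h) + C ((m + 1 : ℕ) : F) * tth F h)), hrw]
    have key1 : ev F (pih F h) * ev F h ^ (m + 1) * (wy F * Cm)
        - (m + 2) • (ev F (tth F h) * yh F h ^ (m + 2))
        = (m + 2) • (ev F (h * derivative (tth F h)) * yh F h ^ (m + 1))
          + yh F h * (ev F (mgcd F h (derivative h)) * c)
          - ev F (mgcd F h (derivative h))
              * (ev F (derivative (pih F h) + C ((m + 1 : ℕ) : F) * tth F h)
                * ((m + 2) • (ev F (tth F h) * yh F h ^ (m + 1))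
                  + ev F (mgcd F h (derivative h)) * c)) := by
      rw [t2, ev_wy, sub_mul, t4, t5, ← t6]
      abel
    have key0 : ev F (pih F h) * ev F h ^ (m + 1)
          * (wy F ^ (m + 2 + 1) * ev F h - ev F h * wy F ^ (m + 2 + 1))
        - (m + 2 + 1) • (ev F (tth F h) * yh F h ^ (m + 2))
        = (ev F (pih F h) * ev F h ^ (m + 1) * (wy F * Cm)
            - (m + 2) • (ev F (tth F h) * yh F h ^ (m + 2)))
          + (ev F (pih F h) * ev F h ^ (m + 1) * (ev F (derivative h) * wy F ^ (m + 2))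
            - ev F (tth F h) * yh F h ^ (m + 2)) := by
      rw [e_c, mul_add, succ_nsmul]
      abel
    rw [key0, key1, key2]
    refine EE.add h (EE.sub h (EE.add h ?_ ?_) ?_) ?_
    · exact EE.nsmul h _ (EE.of_dvd h (Dvd.dvd.mul_right (mgcd_dvd h) _)
        (pow_mem (mem_yh h) _))
    · exact (EE.basic h hc).yh_mul h hh
    · exact EE.basic h (mul_mem (mem_ev h _) hZmem)
    · exact EE.pmul h _ (EE.basic h hc₂)

end S16
namespace S16
variable {F : Type} [Field F]

lemma ev_sub (p q : F[X]) : ev F (p - q) = ev F p - ev F q := map_sub (aeval (wx F)) p q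

lemma ev_add (p q : F[X]) : ev F (p + q) = ev F p + ev F q := map_add (aeval (wx F)) p q

lemma ev_nsmul (n : ℕ) (p : F[X]) : ev F (n • p) = n • ev F p := map_nsmul (aeval (wx F)) n p

lemma ev_zero : ev F (0 : F[X]) = 0 := map_zero (aeval (wx F))

lemma hpow_fac (h : F[X]) (hh : h ≠ 0) (m : ℕ) :
    h ^ (m + 1) = mgcd F h (derivative h) * pih F h * h ^ m := by
  rw [pow_succ']
  nth_rewrite 1 [h_fac h hh]
  ring

lemma dQ (h : F[X]) (hh : h ≠ 0) (g : F[X]) (m : ℕ) :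
    derivative (g * pih F h * h ^ (m + 1))
      = (derivative (g * pih F h) + C ((m + 1 : ℕ) : F) * (g * tth F h)) * h ^ (m + 1) := by
  rw [derivative_mul, dpow h hh m, hpow_fac h hh m]
  ring

lemma hzero (h g : F[X]) (m : ℕ) :
    (m + 2) • (g * tth F h)
      - (derivative (g * pih F h) + C ((m + 1 : ℕ) : F) * (g * tth F h))
      + delta0 F h g = 0 := by
  simp only [delta0, ← tth_def, C_eq_natCast, nsmul_eq_mul]
  push_cast
  ring

/-- Part (b): `[g·a_{m+1}, ŷ] + δ₀(g) ŷ^{m+1} ∈ gcd·A_h`. -/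
lemma commC (h : F[X]) (hh : h ≠ 0) (g : F[X]) (m : ℕ) :
    EE h ((ev F g * (ev F (pih F h) * ev F h ^ m * wy F ^ (m + 1))) * yh F h
      - yh F h * (ev F g * (ev F (pih F h) * ev F h ^ m * wy F ^ (m + 1)))
      + ev F (delta0 F h g) * yh F h ^ (m + 1)) := by
  obtain ⟨cB, hcB, hcB'⟩ := commB h hh m
  obtain ⟨cM, hcM, hcM'⟩ := pow_diff h hh (m + 1)
  have hrwB : ev F (pih F h) * ev F h ^ m
        * (wy F ^ (m + 2) * ev F h - ev F h * wy F ^ (m + 2))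
      = (m + 2) • (ev F (tth F h) * yh F h ^ (m + 1))
        + ev F (mgcd F h (derivative h)) * cB := by
    rw [← hcB']; abel
  have hrwM : ev F h ^ (m + 1) * wy F ^ (m + 1)
      = yh F h ^ (m + 1) + ev F (mgcd F h (derivative h)) * cM := by
    rw [← hcM']; abel
  have pw : wy F ^ (m + 1) * wy F = wy F ^ (m + 2) := by rw [← pow_succ]
  have pw' : wy F * wy F ^ (m + 1) = wy F ^ (m + 2) := by rw [← pow_succ']
  have w1 : ev F h * (ev F g * (ev F (pih F h) * ev F h ^ m))
      = ev F (g * pih F h * h ^ (m + 1)) := by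
    rw [← ev_pow, ← S16.ev_mul, ← S16.ev_mul, ← S16.ev_mul,
      show h * (g * (pih F h * h ^ m)) = g * pih F h * h ^ (m + 1) from by ring]
  have u1 : (ev F g * (ev F (pih F h) * ev F h ^ m * wy F ^ (m + 1))) * (wy F * ev F h)
      = ev F g * (ev F (pih F h) * ev F h ^ m * (wy F ^ (m + 2) * ev F h)) := by
    rw [← pw]; noncomm_ring
  have u2 : (wy F * ev F h) * (ev F g * (ev F (pih F h) * ev F h ^ m * wy F ^ (m + 1)))
      = wy F * ev F (g * pih F h * h ^ (m + 1)) * wy F ^ (m + 1) := by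
    rw [← w1]; noncomm_ring
  have w2 : ev F (g * pih F h * h ^ (m + 1)) * wy F ^ (m + 2)
      = ev F g * (ev F (pih F h) * ev F h ^ m * (ev F h * wy F ^ (m + 2))) := by
    rw [show g * pih F h * h ^ (m + 1) = g * (pih F h * (h ^ m * h)) from by ring,
      S16.ev_mul, S16.ev_mul, S16.ev_mul, ev_pow]
    noncomm_ring
  have u4 : ev F (derivative (g * pih F h * h ^ (m + 1))) * wy F ^ (m + 1)
      = ev F (derivative (g * pih F h) + C ((m + 1 : ℕ) : F) * (g * tth F h))
          * (ev F h ^ (m + 1) * wy F ^ (m + 1)) := by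
    rw [dQ h hh g m, S16.ev_mul, ev_pow, mul_assoc]
  have s1 : (ev F g * (ev F (pih F h) * ev F h ^ m * wy F ^ (m + 1))) * yh F h
        - yh F h * (ev F g * (ev F (pih F h) * ev F h ^ m * wy F ^ (m + 1)))
      = ev F g * (ev F (pih F h) * ev F h ^ m
          * (wy F ^ (m + 2) * ev F h - ev F h * wy F ^ (m + 2)))
        - ev F (derivative (g * pih F h * h ^ (m + 1))) * wy F ^ (m + 1) := by
    rw [yh_def, u1, u2, wy_ev, add_mul, mul_assoc (ev F (g * pih F h * h ^ (m + 1))), pw',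
      w2, mul_sub]
    noncomm_ring
    simp only [mul_smul_comm]
    abel
  have hmain : ev F g * ((m + 2) • (ev F (tth F h) * yh F h ^ (m + 1)))
      = ev F ((m + 2) • (g * tth F h)) * yh F h ^ (m + 1) := by
    rw [mul_smul_comm, ← mul_assoc, ← S16.ev_mul, ev_nsmul, smul_mul_assoc]
  have hcancel : ev F g * ((m + 2) • (ev F (tth F h) * yh F h ^ (m + 1)))
        - ev F (derivative (g * pih F h) + C ((m + 1 : ℕ) : F) * (g * tth F h))
            * yh F h ^ (m + 1)
        + ev F (delta0 F h g) * yh F h ^ (m + 1) = 0 := by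
    rw [hmain, ← sub_mul, ← add_mul, ← ev_sub, ← ev_add, hzero h g m, ev_zero, zero_mul]
  have exp : (ev F g * (ev F (pih F h) * ev F h ^ m * wy F ^ (m + 1))) * yh F h
        - yh F h * (ev F g * (ev F (pih F h) * ev F h ^ m * wy F ^ (m + 1)))
        + ev F (delta0 F h g) * yh F h ^ (m + 1)
      = (ev F g * ((m + 2) • (ev F (tth F h) * yh F h ^ (m + 1)))
          - ev F (derivative (g * pih F h) + C ((m + 1 : ℕ) : F) * (g * tth F h))
              * yh F h ^ (m + 1)
          + ev F (delta0 F h g) * yh F h ^ (m + 1))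
        + (ev F g * (ev F (mgcd F h (derivative h)) * cB)
          - ev F (derivative (g * pih F h) + C ((m + 1 : ℕ) : F) * (g * tth F h))
              * (ev F (mgcd F h (derivative h)) * cM)) := by
    rw [s1, hrwB, u4, hrwM, mul_add, mul_add]
    abel
  rw [exp, hcancel, zero_add]
  exact EE.sub h (EE.pmul h g (EE.basic h hcB)) (EE.pmul h _ (EE.basic h hcM))

end S16
namespace S16
variable {F : Type} [Field F]

/-- commutator with `ŷ^k`. -/
lemma commD (h : F[X]) (hh : h ≠ 0) (g : F[X]) (m : ℕ) (k : ℕ) :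
    EE h ((ev F g * (ev F (pih F h) * ev F h ^ m * wy F ^ (m + 1))) * yh F h ^ k
      - yh F h ^ k * (ev F g * (ev F (pih F h) * ev F h ^ m * wy F ^ (m + 1)))
      + k • (ev F (delta0 F h g) * yh F h ^ (m + k))) := by
  induction k with
  | zero => simpa using EE.zero h
  | succ k ih =>
    simp only [show m + (k + 1) = m + k + 1 from rfl]
    obtain ⟨c₂, hc₂, hc₂'⟩ := ih
    obtain ⟨c₁, hc₁, hc₁'⟩ := commC h hh g m
    have hrwI : (ev F g * (ev F (pih F h) * ev F h ^ m * wy F ^ (m + 1))) * yh F h ^ k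
          - yh F h ^ k * (ev F g * (ev F (pih F h) * ev F h ^ m * wy F ^ (m + 1)))
        = ev F (mgcd F h (derivative h)) * c₂
          - k • (ev F (delta0 F h g) * yh F h ^ (m + k)) := by
      rw [← hc₂']; abel
    have hrwC : (ev F g * (ev F (pih F h) * ev F h ^ m * wy F ^ (m + 1))) * yh F h
          - yh F h * (ev F g * (ev F (pih F h) * ev F h ^ m * wy F ^ (m + 1)))
        = ev F (mgcd F h (derivative h)) * c₁
          - ev F (delta0 F h g) * yh F h ^ (m + 1) := by
      rw [← hc₁']; abel
    have pyh : yh F h * yh F h ^ k = yh F h ^ (k + 1) := by rw [← pow_succ']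
    have e0 : (ev F g * (ev F (pih F h) * ev F h ^ m * wy F ^ (m + 1))) * yh F h ^ (k + 1)
          - yh F h ^ (k + 1) * (ev F g * (ev F (pih F h) * ev F h ^ m * wy F ^ (m + 1)))
        = ((ev F g * (ev F (pih F h) * ev F h ^ m * wy F ^ (m + 1))) * yh F h
            - yh F h * (ev F g * (ev F (pih F h) * ev F h ^ m * wy F ^ (m + 1)))) * yh F h ^ k
          + yh F h * ((ev F g * (ev F (pih F h) * ev F h ^ m * wy F ^ (m + 1))) * yh F h ^ k
            - yh F h ^ k * (ev F g * (ev F (pih F h) * ev F h ^ m * wy F ^ (m + 1)))) := by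
      rw [← pyh]
      noncomm_ring
      simp only [mul_smul_comm, smul_mul_assoc]
      noncomm_ring
    have pa : yh F h ^ (m + 1) * yh F h ^ k = yh F h ^ (m + k + 1) := by
      rw [← pow_add, show m + 1 + k = m + k + 1 from by omega]
    have tD : yh F h * (ev F (delta0 F h g) * yh F h ^ (m + k))
        = ev F (delta0 F h g) * yh F h ^ (m + k + 1)
          + ev F (h * derivative (delta0 F h g)) * yh F h ^ (m + k) := by
      rw [← mul_assoc, yh_ev, add_mul, mul_assoc, ← pow_succ']
    have key : (ev F g * (ev F (pih F h) * ev F h ^ m * wy F ^ (m + 1))) * yh F h ^ (k + 1)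
          - yh F h ^ (k + 1) * (ev F g * (ev F (pih F h) * ev F h ^ m * wy F ^ (m + 1)))
          + (k + 1) • (ev F (delta0 F h g) * yh F h ^ (m + k + 1))
        = (ev F (mgcd F h (derivative h)) * c₁) * yh F h ^ k
          + yh F h * (ev F (mgcd F h (derivative h)) * c₂)
          - k • (ev F (h * derivative (delta0 F h g)) * yh F h ^ (m + k)) := by
      rw [e0, hrwC, hrwI, sub_mul, mul_sub, mul_assoc (ev F (delta0 F h g)), pa,
        mul_smul_comm, tD, smul_add, succ_nsmul]
      abel
    rw [key]
    refine EE.sub h (EE.add h ?_ ?_) ?_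
    · exact (EE.basic h hc₁).mul_right h (pow_mem (mem_yh h) k)
    · exact (EE.basic h hc₂).yh_mul h hh
    · exact EE.nsmul h _ (EE.of_dvd h (Dvd.dvd.mul_right (mgcd_dvd h) _)
        (pow_mem (mem_yh h) _))

end S16
/-- in characteristic `0`, for `g ∈ F[x]` and `n ≥ 1`:
(a) `[g(x)·a_n, x] = n·(π_h·g)(x)·h(x)^{n−1}·y^{n−1}` and
`[g(x)·a_n, x] − n·(π_h·g)(x)·ŷ^{n−1} ∈ gcd(h, h')(x)·A_h`;
(b) `[g(x)·a_n, ŷ] + δ₀(g)(x)·ŷ^n ∈ gcd(h, h')(x)·A_h`;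
(c) `[g(x)·a_n, p(x)·ŷ^k] − (n·π_h·g·p' − k·p·δ₀(g))(x)·ŷ^{n+k−1}
     ∈ gcd(h, h')(x)·A_h`. -/
theorem statement16 [CharZero F] (h : F[X]) (hh : h ≠ 0) (g : F[X]) (n : ℕ)
    (hn : 1 ≤ n) :
    ((aeval (wx F) g * aelem F h n) * wx F - wx F * (aeval (wx F) g * aelem F h n)
        = n • (aeval (wx F) (pih F h * g) * (aeval (wx F) h) ^ (n - 1) * wy F ^ (n - 1))) ∧
    (∃ c ∈ Ah F h,
      ((aeval (wx F) g * aelem F h n) * wx F - wx F * (aeval (wx F) g * aelem F h n))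
          - n • (aeval (wx F) (pih F h * g) * (wy F * aeval (wx F) h) ^ (n - 1))
        = aeval (wx F) (mgcd F h (derivative h)) * c) ∧
    (∃ c ∈ Ah F h,
      ((aeval (wx F) g * aelem F h n) * (wy F * aeval (wx F) h)
          - (wy F * aeval (wx F) h) * (aeval (wx F) g * aelem F h n))
          + aeval (wx F) (delta0 F h g) * (wy F * aeval (wx F) h) ^ n
        = aeval (wx F) (mgcd F h (derivative h)) * c) ∧
    (∀ (q : F[X]) (k : ℕ), ∃ c ∈ Ah F h,
      ((aeval (wx F) g * aelem F h n) * (aeval (wx F) q * (wy F * aeval (wx F) h) ^ k)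
          - (aeval (wx F) q * (wy F * aeval (wx F) h) ^ k) * (aeval (wx F) g * aelem F h n))
          - aeval (wx F) (n • (pih F h * g * derivative q) - k • (q * delta0 F h g)) *
              (wy F * aeval (wx F) h) ^ (n + k - 1)
        = aeval (wx F) (mgcd F h (derivative h)) * c) := by
  classical
  obtain ⟨m, rfl⟩ : ∃ m, n = m + 1 := ⟨n - 1, (Nat.succ_pred_eq_of_pos hn).symm⟩
  have hev : ∀ p : F[X], aeval (wx F) p = S16.ev F p := fun _ => rfl
  have ha : aelem F h (m + 1)
      = S16.ev F (pih F h) * S16.ev F h ^ m * wy F ^ (m + 1) := by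
    rw [aelem, Nat.add_sub_cancel]; rfl
  simp only [hev, Nat.add_sub_cancel, ← S16.yh_def, ha]
  have hyx : wy F ^ (m + 1) * wx F - wx F * wy F ^ (m + 1) = (m + 1) • wy F ^ m := by
    rw [S16.wy_pow_wx (m + 1), Nat.add_sub_cancel]; abel
  have mv2 : wx F * (S16.ev F g * (S16.ev F (pih F h) * S16.ev F h ^ m))
      = (S16.ev F g * (S16.ev F (pih F h) * S16.ev F h ^ m)) * wx F := by
    rw [← S16.ev_pow, ← S16.ev_mul, ← S16.ev_mul, S16.wx_ev]
  have mv : wx F * (S16.ev F g * (S16.ev F (pih F h) * S16.ev F h ^ m * wy F ^ (m + 1)))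
      = (S16.ev F g * (S16.ev F (pih F h) * S16.ev F h ^ m)) * (wx F * wy F ^ (m + 1)) := by
    calc wx F * (S16.ev F g * (S16.ev F (pih F h) * S16.ev F h ^ m * wy F ^ (m + 1)))
        = (wx F * (S16.ev F g * (S16.ev F (pih F h) * S16.ev F h ^ m))) * wy F ^ (m + 1) := by
          noncomm_ring
      _ = ((S16.ev F g * (S16.ev F (pih F h) * S16.ev F h ^ m)) * wx F) * wy F ^ (m + 1) := by
          rw [mv2]
      _ = (S16.ev F g * (S16.ev F (pih F h) * S16.ev F h ^ m)) * (wx F * wy F ^ (m + 1)) := by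
          rw [mul_assoc]
  have key1 : (S16.ev F g * (S16.ev F (pih F h) * S16.ev F h ^ m * wy F ^ (m + 1))) * wx F
        - wx F * (S16.ev F g * (S16.ev F (pih F h) * S16.ev F h ^ m * wy F ^ (m + 1)))
      = (S16.ev F g * (S16.ev F (pih F h) * S16.ev F h ^ m))
          * (wy F ^ (m + 1) * wx F - wx F * wy F ^ (m + 1)) := by
    rw [mul_sub, mv]
    noncomm_ring
  have meq : S16.ev F (pih F h * g) * S16.ev F h ^ m * wy F ^ m
      = (S16.ev F g * (S16.ev F (pih F h) * S16.ev F h ^ m)) * wy F ^ m := by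
    rw [S16.ev_mul, S16.ev_comm (pih F h) g]
    noncomm_ring
  have conj1 : (S16.ev F g * (S16.ev F (pih F h) * S16.ev F h ^ m * wy F ^ (m + 1))) * wx F
        - wx F * (S16.ev F g * (S16.ev F (pih F h) * S16.ev F h ^ m * wy F ^ (m + 1)))
      = (m + 1) • (S16.ev F (pih F h * g) * S16.ev F h ^ m * wy F ^ m) := by
    rw [key1, hyx, mul_smul_comm, meq]
  refine ⟨conj1, ?_, ?_, ?_⟩
  · -- (a2)
    have key2 : (S16.ev F g * (S16.ev F (pih F h) * S16.ev F h ^ m * wy F ^ (m + 1))) * wx F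
          - wx F * (S16.ev F g * (S16.ev F (pih F h) * S16.ev F h ^ m * wy F ^ (m + 1)))
          - (m + 1) • (S16.ev F (pih F h * g) * S16.yh F h ^ m)
        = (m + 1) • (S16.ev F (pih F h * g)
            * (S16.ev F h ^ m * wy F ^ m - S16.yh F h ^ m)) := by
      rw [conj1, mul_sub (S16.ev F (pih F h * g)), smul_sub, ← mul_assoc]
    rw [key2]
    exact S16.EE.nsmul h _ (S16.EE.pmul h _ (S16.pow_diff h hh m))
  · -- (b)
    exact S16.commC h hh g m
  · -- (c)
    intro q k
    rw [show m + 1 + k - 1 = m + k from by omega]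
    obtain ⟨cA, hcA, hcA'⟩ := S16.commA h hh q m
    obtain ⟨cD, hcD, hcD'⟩ := S16.commD h hh g m k
    have hrwA : S16.ev F (pih F h) * S16.ev F h ^ m
          * (wy F ^ (m + 1) * S16.ev F q - S16.ev F q * wy F ^ (m + 1))
        = (m + 1) • (S16.ev F (pih F h * derivative q) * S16.yh F h ^ m)
          + S16.ev F (mgcd F h (derivative h)) * cA := by
      rw [← hcA']; abel
    have hrwD : (S16.ev F g * (S16.ev F (pih F h) * S16.ev F h ^ m * wy F ^ (m + 1)))
            * S16.yh F h ^ k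
          - S16.yh F h ^ k * (S16.ev F g * (S16.ev F (pih F h) * S16.ev F h ^ m * wy F ^ (m + 1)))
        = S16.ev F (mgcd F h (derivative h)) * cD
          - k • (S16.ev F (delta0 F h g) * S16.yh F h ^ (m + k)) := by
      rw [← hcD']; abel
    have wq : S16.ev F q * (S16.ev F g * (S16.ev F (pih F h) * S16.ev F h ^ m))
        = (S16.ev F g * (S16.ev F (pih F h) * S16.ev F h ^ m)) * S16.ev F q := by
      rw [← S16.ev_pow, ← S16.ev_mul, ← S16.ev_mul, S16.ev_comm]
    have mv4 : S16.ev F q * (S16.ev F g * (S16.ev F (pih F h) * S16.ev F h ^ m * wy F ^ (m + 1)))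
        = S16.ev F g * (S16.ev F (pih F h) * S16.ev F h ^ m * (S16.ev F q * wy F ^ (m + 1))) := by
      calc S16.ev F q * (S16.ev F g * (S16.ev F (pih F h) * S16.ev F h ^ m * wy F ^ (m + 1)))
          = (S16.ev F q * (S16.ev F g * (S16.ev F (pih F h) * S16.ev F h ^ m))) * wy F ^ (m + 1) := by
            noncomm_ring
        _ = ((S16.ev F g * (S16.ev F (pih F h) * S16.ev F h ^ m)) * S16.ev F q) * wy F ^ (m + 1) := by
            rw [wq]
        _ = S16.ev F g * (S16.ev F (pih F h) * S16.ev F h ^ m * (S16.ev F q * wy F ^ (m + 1))) := by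
            noncomm_ring
    have eA : (S16.ev F g * (S16.ev F (pih F h) * S16.ev F h ^ m * wy F ^ (m + 1))) * S16.ev F q
          - S16.ev F q * (S16.ev F g * (S16.ev F (pih F h) * S16.ev F h ^ m * wy F ^ (m + 1)))
        = S16.ev F g * (S16.ev F (pih F h) * S16.ev F h ^ m
            * (wy F ^ (m + 1) * S16.ev F q - S16.ev F q * wy F ^ (m + 1))) := by
      rw [mv4, mul_sub, mul_sub]
      noncomm_ring
    have e0 : (S16.ev F g * (S16.ev F (pih F h) * S16.ev F h ^ m * wy F ^ (m + 1)))
            * (S16.ev F q * S16.yh F h ^ k)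
          - (S16.ev F q * S16.yh F h ^ k)
            * (S16.ev F g * (S16.ev F (pih F h) * S16.ev F h ^ m * wy F ^ (m + 1)))
        = ((S16.ev F g * (S16.ev F (pih F h) * S16.ev F h ^ m * wy F ^ (m + 1))) * S16.ev F q
            - S16.ev F q * (S16.ev F g * (S16.ev F (pih F h) * S16.ev F h ^ m * wy F ^ (m + 1))))
              * S16.yh F h ^ k
          + S16.ev F q * ((S16.ev F g * (S16.ev F (pih F h) * S16.ev F h ^ m * wy F ^ (m + 1)))
              * S16.yh F h ^ k
            - S16.yh F h ^ k
              * (S16.ev F g * (S16.ev F (pih F h) * S16.ev F h ^ m * wy F ^ (m + 1)))) := by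
      noncomm_ring
      simp only [mul_smul_comm, smul_mul_assoc]
      noncomm_ring
    have m1 : (S16.ev F g * ((m + 1) • (S16.ev F (pih F h * derivative q) * S16.yh F h ^ m)))
            * S16.yh F h ^ k
        = (m + 1) • (S16.ev F (pih F h * g * derivative q) * S16.yh F h ^ (m + k)) := by
      rw [mul_smul_comm, smul_mul_assoc, ← mul_assoc, ← S16.ev_mul, mul_assoc, ← pow_add,
        show g * (pih F h * derivative q) = pih F h * g * derivative q from by ring]
    have m2 : S16.ev F q * (k • (S16.ev F (delta0 F h g) * S16.yh F h ^ (m + k)))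
        = k • (S16.ev F (q * delta0 F h g) * S16.yh F h ^ (m + k)) := by
      rw [mul_smul_comm, ← mul_assoc, ← S16.ev_mul]
    have m3 : S16.ev F ((m + 1) • (pih F h * g * derivative q) - k • (q * delta0 F h g))
            * S16.yh F h ^ (m + k)
        = (m + 1) • (S16.ev F (pih F h * g * derivative q) * S16.yh F h ^ (m + k))
          - k • (S16.ev F (q * delta0 F h g) * S16.yh F h ^ (m + k)) := by
      rw [S16.ev_sub, S16.ev_nsmul, S16.ev_nsmul, sub_mul, smul_mul_assoc, smul_mul_assoc]
    have key4 : (S16.ev F g * (S16.ev F (pih F h) * S16.ev F h ^ m * wy F ^ (m + 1)))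
            * (S16.ev F q * S16.yh F h ^ k)
          - (S16.ev F q * S16.yh F h ^ k)
            * (S16.ev F g * (S16.ev F (pih F h) * S16.ev F h ^ m * wy F ^ (m + 1)))
          - S16.ev F ((m + 1) • (pih F h * g * derivative q) - k • (q * delta0 F h g))
              * S16.yh F h ^ (m + k)
        = (S16.ev F g * (S16.ev F (mgcd F h (derivative h)) * cA)) * S16.yh F h ^ k
          + S16.ev F q * (S16.ev F (mgcd F h (derivative h)) * cD) := by
      rw [e0, eA, hrwA, hrwD, mul_add (S16.ev F g), add_mul, mul_sub (S16.ev F q), m1, m2, m3]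
      abel
    rw [key4]
    exact S16.EE.add h ((S16.EE.pmul h g (S16.EE.basic h hcA)).mul_right h
      (pow_mem (S16.mem_yh h) k)) (S16.EE.pmul h q (S16.EE.basic h hcD))
end
end

section
/- For every integer i ≥ 0, π_h·Θ_i' − i·Θ_i·π_h' ∈ Θ_{i+1}·F[x], where ' denotes the formal derivative. -/
open Polynomial
open scoped Classical

noncomputable section

variable (F : Type) [Field F]


private lemma derivative_finset_prod {R : Type*} [CommSemiring R] {ι : Type*} [DecidableEq ι]
    (s : Finset ι) (f : ι → R[X]) :
    derivative (∏ k ∈ s, f k) = ∑ k ∈ s, (∏ l ∈ s.erase k, f l) * derivative (f k) := by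
  induction s using Finset.induction_on with
  | empty => simp
  | @insert a s ha ih =>
      rw [Finset.prod_insert ha, derivative_mul, Finset.sum_insert ha, ih,
        Finset.erase_insert ha, Finset.mul_sum, mul_comm]
      congr 1
      refine Finset.sum_congr rfl fun k hk => ?_
      rw [Finset.erase_insert_of_ne (by rintro rfl; exact ha hk),
        Finset.prod_insert (fun h => ha (Finset.mem_of_mem_erase h)), mul_assoc]

/-- with `h = ∏ u_j^{α_j}`, `π_h = ∏ u_j` and
`Θ_i = ∏ u_j^{min(α_j−1, i)}`, for every `i ≥ 0` one has
`π_h·Θ_i' − i·Θ_i·π_h' ∈ Θ_{i+1}·F[x]`. -/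
theorem statement17 [CharZero F] (t : ℕ) (u : Fin t → F[X])
    (humonic : ∀ j, (u j).Monic) (huirr : ∀ j, Irreducible (u j))
    (hudist : Function.Injective u)
    (α : Fin t → ℕ) (hα : ∀ j, 1 ≤ α j) :
    ∀ i : ℕ, ∃ f : F[X],
      (∏ j, u j) * derivative (∏ j, u j ^ (min (α j - 1) i))
          - i • ((∏ j, u j ^ (min (α j - 1) i)) * derivative (∏ j, u j))
        = (∏ j, u j ^ (min (α j - 1) (i + 1))) * f := by
  intro i
  set m : Fin t → ℕ := fun j => min (α j - 1) i with hm
  set M : Fin t → ℕ := fun j => min (α j - 1) (i + 1) with hM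
  suffices hdvd : (∏ j, u j ^ M j) ∣
      ((∏ j, u j) * derivative (∏ j, u j ^ m j)
        - i • ((∏ j, u j ^ m j) * derivative (∏ j, u j))) by
    obtain ⟨f, hf⟩ := hdvd
    exact ⟨f, hf⟩
  rw [derivative_finset_prod, derivative_finset_prod, Finset.mul_sum, Finset.mul_sum,
    Finset.smul_sum, ← Finset.sum_sub_distrib]
  apply Finset.dvd_sum
  intro j _
  have hπ : (∏ k, u k) = u j * ∏ k ∈ Finset.univ.erase j, u k :=
    (Finset.mul_prod_erase _ _ (Finset.mem_univ j)).symm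
  have hΘ : (∏ k, u k ^ m k) = u j ^ m j * ∏ k ∈ Finset.univ.erase j, u k ^ m k :=
    (Finset.mul_prod_erase _ _ (Finset.mem_univ j)).symm
  have hsplit : ∏ k ∈ Finset.univ.erase j, u k ^ (m k + 1)
      = (∏ k ∈ Finset.univ.erase j, u k ^ m k) * ∏ k ∈ Finset.univ.erase j, u k := by
    rw [← Finset.prod_mul_distrib]
    exact Finset.prod_congr rfl fun k _ => pow_succ _ _
  have hE : (∏ k, u k) * ((∏ k ∈ Finset.univ.erase j, u k ^ m k) * derivative (u j ^ m j))
      - i • ((∏ k, u k ^ m k) * ((∏ k ∈ Finset.univ.erase j, u k) * derivative (u j)))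
      = (((m j : F[X]) - (i : F[X])) * derivative (u j))
          * (u j ^ m j * ∏ k ∈ Finset.univ.erase j, u k ^ (m k + 1)) := by
    rw [derivative_pow, hπ, hΘ, hsplit, nsmul_eq_mul, C_eq_natCast]
    rcases Nat.eq_zero_or_pos (m j) with h0 | h1
    · simp only [h0, Nat.cast_zero, zero_mul, mul_zero, pow_zero, zero_sub]
      ring
    · have hu : u j * u j ^ (m j - 1) = u j ^ m j := by
        rw [← pow_succ']
        congr 1
        omega
      rw [← hu]
      ring
  rw [hE]
  rcases eq_or_lt_of_le (min_le_right (α j - 1) i : m j ≤ i) with heq | hlt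
  · rw [show m j = i from heq, sub_self, zero_mul, zero_mul]
    exact dvd_zero _
  · apply Dvd.dvd.mul_left
    have hMj : M j = m j := by
      simp only [hm, hM] at hlt ⊢
      omega
    have hstep : (∏ k, u k ^ M k)
        = u j ^ M j * ∏ k ∈ Finset.univ.erase j, u k ^ M k :=
      (Finset.mul_prod_erase _ _ (Finset.mem_univ j)).symm
    rw [hstep, hMj]
    exact mul_dvd_mul dvd_rfl
      (Finset.prod_dvd_prod_of_dvd _ _ fun k _ => pow_dvd_pow _ (by
        simp only [hm, hM]; omega))
end
end

section
/- There exists ν ∈ F[x], unique modulo u_1⋯u_k·F[x], such that ν·δ₀(1) ≡ 1 (mod u_1⋯u_k·F[x]). For any such ν: (a) ν·π_h' − 1 − ν·(h'/gcd(h, h')) ∈ u_1⋯u_k·F[x]; (b) for each 1 ≤ j ≤ k, (1 − α_j)·ν·π_h' ≡ 1 (mod u_j·F[x]). -/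
/-!
Writing `Pᵢ = ∏_{l ≠ i} u_l`, we have `π_h' = ∑ uᵢ' Pᵢ` and `h' / gcd(h, h') = ∑ αᵢ uᵢ' Pᵢ`, and
modulo `uⱼ` both sums reduce to their `j`-th term, so `δ₀(1) ≡ (1 - αⱼ) π_h' (mod uⱼ)`.
In characteristic `0` the product `π_h` of distinct monic irreducibles is separable, so
`uⱼ ∤ π_h'`, and `1 - αⱼ` is a nonzero constant for `j ≤ k`. Hence `δ₀(1)` is coprime to
`u_1⋯u_k`, which gives `ν` and its uniqueness; (b) is the congruence above multiplied by `ν`.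
-/

open Polynomial
open scoped Classical

noncomputable section

variable (F : Type) [Field F]

theorem Finset.dvd_sum_prod_erase_mul_sub {ι R : Type*} [CommRing R] [DecidableEq ι]
    {s : Finset ι} {j : ι} (hj : j ∈ s) (f c : ι → R) :
    f j ∣ ∑ i ∈ s, (∏ l ∈ s.erase i, f l) * c i - (∏ l ∈ s.erase j, f l) * c j := by
  rw [← Finset.add_sum_erase s _ hj, add_sub_cancel_left]
  exact Finset.dvd_sum fun i hi =>
    (Finset.dvd_prod_of_mem f
      (Finset.mem_erase.2 ⟨(Finset.ne_of_mem_erase hi).symm, hj⟩)).mul_right _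

namespace Polynomial

variable {ι : Type*}

theorem derivative_prod_pow [DecidableEq ι] {R : Type*} [CommRing R] (s : Finset ι)
    (f : ι → R[X]) {n : ι → ℕ} (hn : ∀ i ∈ s, n i ≠ 0) :
    derivative (∏ i ∈ s, f i ^ n i) =
      (∏ i ∈ s, f i ^ (n i - 1)) *
        ∑ i ∈ s, (∏ l ∈ s.erase i, f l) * (C (n i : R) * derivative (f i)) := by
  rw [derivative_prod_finset, Finset.mul_sum]
  refine Finset.sum_congr rfl fun i hi => ?_
  have hsplit : ∏ l ∈ s.erase i, f l ^ n l =
      (∏ l ∈ s.erase i, f l ^ (n l - 1)) * ∏ l ∈ s.erase i, f l := by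
    rw [← Finset.prod_mul_distrib]
    exact Finset.prod_congr rfl fun l hl =>
      (pow_sub_one_mul (hn l (Finset.mem_of_mem_erase hl)) _).symm
  rw [hsplit, derivative_pow, ← Finset.mul_prod_erase s (fun l => f l ^ (n l - 1)) hi]
  ring

variable {K : Type*} [Field K] [Fintype ι] {u : ι → K[X]}

theorem derivative_prod_pow_div [DecidableEq ι] (hu : ∀ i, u i ≠ 0) {α : ι → ℕ}
    (hα : ∀ i, α i ≠ 0) :
    derivative (∏ i, u i ^ α i) / ∏ i, u i ^ (α i - 1) =
      ∑ i, (∏ l ∈ Finset.univ.erase i, u l) * (C (α i : K) * derivative (u i)) := by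
  rw [derivative_prod_pow _ _ fun i _ => hα i, mul_div_cancel_left₀]
  exact Finset.prod_ne_zero_iff.2 fun i _ => pow_ne_zero _ (hu i)

theorem not_dvd_derivative_prod [CharZero K] (hmonic : ∀ i, (u i).Monic)
    (hirr : ∀ i, Irreducible (u i)) (hinj : Function.Injective u) (j : ι) :
    ¬ u j ∣ derivative (∏ i, u i) := by
  have hcop : Pairwise (Function.onFun IsCoprime u) := fun i l hil =>
    (hirr i).coprime_iff_not_dvd.2 fun hdvd => hil <| hinj <|
      eq_of_monic_of_associated (hmonic i) (hmonic l) ((hirr i).associated_of_dvd (hirr l) hdvd)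
  have hsep : (∏ i, u i).Separable := separable_prod hcop fun i => (hirr i).separable
  exact fun hdvd => (hirr j).not_isUnit <|
    IsCoprime.isUnit_of_dvd' hsep (Finset.dvd_prod_of_mem u (Finset.mem_univ j)) hdvd

/-- `δ₀(1) = π_h' − h'/gcd(h, h')` for `h = ∏ uᵢ ^ αᵢ`, with `gcd(h, h')` written as
`∏ uᵢ ^ (αᵢ - 1)`. -/
def deltaZero (u : ι → K[X]) (α : ι → ℕ) : K[X] :=
  derivative (∏ i, u i) - derivative (∏ i, u i ^ α i) / ∏ i, u i ^ (α i - 1)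

theorem dvd_deltaZero_sub (hu : ∀ i, u i ≠ 0) {α : ι → ℕ} (hα : ∀ i, α i ≠ 0) (j : ι) :
    u j ∣ deltaZero u α - C (1 - (α j : K)) * derivative (∏ i, u i) := by
  have hπ := Finset.dvd_sum_prod_erase_mul_sub (Finset.mem_univ j) u (fun i => derivative (u i))
  have hq := Finset.dvd_sum_prod_erase_mul_sub (Finset.mem_univ j) u
    (fun i => C (α i : K) * derivative (u i))
  rw [← derivative_prod_finset] at hπ
  rw [← derivative_prod_pow_div hu hα] at hq
  convert dvd_sub (hπ.mul_left (C (α j : K))) hq using 1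
  rw [deltaZero, C_sub, C_1]
  ring

theorem isCoprime_deltaZero [CharZero K] (hmonic : ∀ i, (u i).Monic)
    (hirr : ∀ i, Irreducible (u i)) (hinj : Function.Injective u) {α : ι → ℕ}
    (hα : ∀ i, α i ≠ 0) {j : ι} (hj : α j ≠ 1) : IsCoprime (u j) (deltaZero u α) := by
  refine (hirr j).coprime_iff_not_dvd.2 fun hdvd => ?_
  have hunit : IsUnit (C (1 - (α j : K))) :=
    isUnit_C.2 (sub_ne_zero.2 (by exact_mod_cast hj.symm)).isUnit
  have hdvd' : u j ∣ C (1 - (α j : K)) * derivative (∏ i, u i) := by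
    simpa using dvd_sub hdvd (dvd_deltaZero_sub (fun i => (hmonic i).ne_zero) hα j)
  exact not_dvd_derivative_prod hmonic hirr hinj j ((hunit.dvd_mul_left).1 hdvd')

end Polynomial

theorem statement18 [CharZero F] (t k : ℕ)
    (u : Fin t → F[X])
    (humonic : ∀ j, (u j).Monic) (huirr : ∀ j, Irreducible (u j))
    (hudist : Function.Injective u)
    (α : Fin t → ℕ)
    (hαbig : ∀ j : Fin t, (j : ℕ) < k → 2 ≤ α j)
    (hαone : ∀ j : Fin t, k ≤ (j : ℕ) → α j = 1) :
    (∃ ν : F[X],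
      (∏ j ∈ Finset.univ.filter (fun j : Fin t => (j : ℕ) < k), u j) ∣
        (ν * (derivative (∏ j, u j) -
          derivative (∏ j, u j ^ α j) / (∏ j, u j ^ (α j - 1))) - 1)) ∧
    (∀ ν ν' : F[X],
      (∏ j ∈ Finset.univ.filter (fun j : Fin t => (j : ℕ) < k), u j) ∣
        (ν * (derivative (∏ j, u j) -
          derivative (∏ j, u j ^ α j) / (∏ j, u j ^ (α j - 1))) - 1) →
      (∏ j ∈ Finset.univ.filter (fun j : Fin t => (j : ℕ) < k), u j) ∣
        (ν' * (derivative (∏ j, u j) -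
          derivative (∏ j, u j ^ α j) / (∏ j, u j ^ (α j - 1))) - 1) →
      (∏ j ∈ Finset.univ.filter (fun j : Fin t => (j : ℕ) < k), u j) ∣ (ν - ν')) ∧
    (∀ ν : F[X],
      (∏ j ∈ Finset.univ.filter (fun j : Fin t => (j : ℕ) < k), u j) ∣
        (ν * (derivative (∏ j, u j) -
          derivative (∏ j, u j ^ α j) / (∏ j, u j ^ (α j - 1))) - 1) →
      ((∏ j ∈ Finset.univ.filter (fun j : Fin t => (j : ℕ) < k), u j) ∣
        (ν * derivative (∏ j, u j) - 1 -
          ν * (derivative (∏ j, u j ^ α j) / (∏ j, u j ^ (α j - 1))))) ∧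
      (∀ j : Fin t, (j : ℕ) < k →
        u j ∣ ((1 - (α j : ℤ)) • (ν * derivative (∏ i, u i)) - 1))) := by
  have hα : ∀ j, α j ≠ 0 := fun j => by
    rcases lt_or_ge (j : ℕ) k with hj | hj
    · exact (two_pos.trans_le (hαbig j hj)).ne'
    · simp [hαone j hj]
  set P := ∏ j ∈ Finset.univ.filter (fun j : Fin t => (j : ℕ) < k), u j
  set δ := derivative (∏ j, u j) - derivative (∏ j, u j ^ α j) / (∏ j, u j ^ (α j - 1))
  have hcop : IsCoprime P δ := IsCoprime.prod_left fun j hj =>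
    isCoprime_deltaZero humonic huirr hudist hα
      (one_lt_two.trans_le (hαbig j (Finset.mem_filter.1 hj).2)).ne'
  refine ⟨?_, fun ν ν' hν hν' => ?_, fun ν hν => ⟨?_, fun j hj => ?_⟩⟩
  · obtain ⟨a, b, hab⟩ := hcop
    exact ⟨b, -a, by linear_combination hab⟩
  · exact hcop.dvd_of_dvd_mul_right (by convert dvd_sub hν hν' using 1; ring)
  · convert hν using 1
    ring
  · have hjP : u j ∣ P :=
      Finset.dvd_prod_of_mem u (Finset.mem_filter.2 ⟨Finset.mem_univ j, hj⟩)
    have hkey : u j ∣ δ - C (1 - (α j : F)) * derivative (∏ i, u i) :=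
      dvd_deltaZero_sub (fun i => (humonic i).ne_zero) hα j
    convert dvd_sub (hjP.trans hν) (hkey.mul_left ν) using 1
    rw [zsmul_eq_mul, C_sub, C_1, C_eq_natCast]
    push_cast
    ring
end
end

section
/- (a) μ ≠ 0 if and only if the only F-subspaces U ⊆ F[x] satisfying T_f^{(μ)}(U) ⊆ U for all f ∈ F[x] are U = {0} and U = F[x]. (b) For μ, μ' ∈ F, there exists an F-linear bijection Φ : F[x] → F[x] such that Φ ∘ T_f^{(μ)} = T_f^{(μ')} ∘ Φ for all f ∈ F[x] if and only if μ = μ'. -/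
open Polynomial
open scoped Classical

noncomputable section

variable (F : Type) [Field F]

lemma aux_eig [CharZero F] {c : F} {g : F[X]} (hg : g ≠ 0)
    (h : X * derivative g = C c * g) : ∃ j : ℕ, c = (j : F) := by
  obtain ⟨n, hn⟩ : ∃ n, g.coeff n ≠ 0 := by
    by_contra hc
    push_neg at hc
    exact hg (Polynomial.ext fun n => by simp [hc n])
  refine ⟨n, ?_⟩
  have hc := congrArg (fun p => Polynomial.coeff p n) h
  simp only [coeff_C_mul] at hc
  cases n with
  | zero =>
    rw [mul_coeff_zero, coeff_X_zero, zero_mul] at hc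
    simpa using (mul_eq_zero.mp hc.symm).resolve_right hn
  | succ m =>
    rw [coeff_X_mul, coeff_derivative] at hc
    rw [mul_comm] at hc
    have h2 : ((m : F) + 1) = c := mul_right_cancel₀ hn hc
    push_cast
    exact h2.symm

/-- for the operators `T_f^{(μ)}(p) = f·p' − μ·f'·p` on `F[x]`
(realizing the Witt-algebra module `V_μ`):
(a) `μ ≠ 0` iff the only subspaces invariant under all `T_f^{(μ)}` are `0` and
`F[x]`; (b) an `F`-linear bijection intertwining `T_f^{(μ)}` and `T_f^{(μ')}`
for all `f` exists iff `μ = μ'`. -/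
theorem statement19 [CharZero F] :
    (∀ μ : F, μ ≠ 0 ↔
      ∀ U : Submodule F F[X],
        (∀ (f q : F[X]), q ∈ U → f * derivative q - μ • (derivative f * q) ∈ U) →
        U = ⊥ ∨ U = ⊤) ∧
    (∀ μ μ' : F,
      (∃ Φ : F[X] ≃ₗ[F] F[X], ∀ (f q : F[X]),
        Φ (f * derivative q - μ • (derivative f * q)) =
          f * derivative (Φ q) - μ' • (derivative f * Φ q)) ↔ μ = μ') := by
  constructor
  · intro μ
    constructor
    · intro hμ U hU
      by_cases hbot : U = ⊥
      · exact Or.inl hbot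
      right
      obtain ⟨p, hpU, hp⟩ := U.ne_bot_iff.mp hbot
      have hD : ∀ q ∈ U, derivative q ∈ U := by
        intro q hq
        simpa using hU 1 q hq
      -- 1 ∈ U
      have h1 : (1 : F[X]) ∈ U := by
        have key : ∀ n : ℕ, ∀ r : F[X], r ≠ 0 → r.natDegree ≤ n → r ∈ U → (1 : F[X]) ∈ U := by
          intro n
          induction n with
          | zero =>
            intro r hr hdeg hrU
            obtain ⟨a, ha⟩ := Polynomial.natDegree_eq_zero.mp (Nat.le_zero.mp hdeg)
            have ha0 : a ≠ 0 := fun h => hr (by rw [← ha, h, map_zero])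
            have : (1 : F[X]) = a⁻¹ • r := by
              rw [← ha, smul_C, smul_eq_mul, inv_mul_cancel₀ ha0, C_1]
            rw [this]
            exact U.smul_mem _ hrU
          | succ m ih =>
            intro r hr hdeg hrU
            by_cases h0 : r.natDegree = 0
            · obtain ⟨a, ha⟩ := Polynomial.natDegree_eq_zero.mp h0
              have ha0 : a ≠ 0 := fun h => hr (by rw [← ha, h, map_zero])
              have : (1 : F[X]) = a⁻¹ • r := by
                rw [← ha, smul_C, smul_eq_mul, inv_mul_cancel₀ ha0, C_1]
              rw [this]
              exact U.smul_mem _ hrU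
            · have hd0 : derivative r ≠ 0 := fun h =>
                h0 (Polynomial.natDegree_eq_zero_of_derivative_eq_zero h)
              have hlt := Polynomial.natDegree_derivative_lt h0
              exact ih (derivative r) hd0 (by omega) (hD r hrU)
        exact key p.natDegree p hp le_rfl hpU
      have hDf : ∀ f : F[X], derivative f ∈ U := by
        intro f
        have := hU f 1 h1
        simp only [derivative_one, mul_zero, mul_one, zero_sub] at this
        have h2 : μ • derivative f ∈ U := (neg_mem_iff).mp this
        have := U.smul_mem μ⁻¹ h2
        rwa [smul_smul, inv_mul_cancel₀ hμ, one_smul] at this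
      have hmon : ∀ n : ℕ, (X : F[X]) ^ n ∈ U := by
        intro n
        have := hDf (X ^ (n + 1))
        rw [derivative_X_pow] at this
        simp only [Nat.add_sub_cancel] at this
        have hc : ((n + 1 : ℕ) : F) ≠ 0 := Nat.cast_ne_zero.mpr (Nat.succ_ne_zero n)
        have h2 := U.smul_mem (((n + 1 : ℕ) : F))⁻¹ this
        rwa [smul_eq_C_mul, ← mul_assoc, ← C_mul, inv_mul_cancel₀ hc, C_1, one_mul] at h2
      rw [eq_top_iff]
      intro q hq
      clear hq
      induction q using Polynomial.induction_on' with
      | add p q hp hq => exact U.add_mem hp hq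
      | monomial n a =>
        rw [← C_mul_X_pow_eq_monomial, ← smul_eq_C_mul]
        exact U.smul_mem _ (hmon n)
    · intro h hμ0
      subst hμ0
      have := h (Submodule.span F {1}) ?_
      · rcases this with h1 | h1
        · have : (1 : F[X]) ∈ Submodule.span F ({1} : Set F[X]) :=
            Submodule.mem_span_singleton_self 1
          rw [h1] at this
          exact one_ne_zero (Submodule.mem_bot F |>.mp this)
        · have : (X : F[X]) ∈ Submodule.span F ({1} : Set F[X]) := h1 ▸ Submodule.mem_top
          obtain ⟨a, ha⟩ := Submodule.mem_span_singleton.mp this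
          rw [smul_eq_C_mul, mul_one] at ha
          exact X_ne_C a ha.symm
      · intro f q hq
        obtain ⟨a, ha⟩ := Submodule.mem_span_singleton.mp hq
        have : derivative q = 0 := by
          rw [← ha, smul_eq_C_mul, mul_one, derivative_C]
        simp [this]
  · intro μ μ'
    constructor
    · rintro ⟨Φ, hΦ⟩
      have key : ∀ (ν ν' : F) (Ψ : F[X] ≃ₗ[F] F[X]),
          (∀ (f q : F[X]), Ψ (f * derivative q - ν • (derivative f * q)) =
            f * derivative (Ψ q) - ν' • (derivative f * Ψ q)) →
          ∃ j : ℕ, ν' - ν = (j : F) := by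
        intro ν ν' Ψ hΨ
        have h1 := hΨ X 1
        simp only [derivative_one, mul_zero, derivative_X, one_mul, mul_one, zero_sub,
          map_neg, map_smul, smul_eq_C_mul] at h1
        have hg : Ψ 1 ≠ 0 := by
          intro h
          exact one_ne_zero (Ψ.injective (h.trans (map_zero Ψ).symm))
        have h2 : Ψ (C ν) = C ν * Ψ 1 := by
          have h3 := Ψ.map_smul ν 1
          rw [smul_eq_C_mul, mul_one] at h3
          rw [h3, smul_eq_C_mul]
        rw [h2] at h1
        apply aux_eig F hg
        rw [map_sub]
        linear_combination -h1
      obtain ⟨j, hj⟩ := key μ μ' Φ hΦ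
      have hΦ' : ∀ (f q : F[X]), Φ.symm (f * derivative q - μ' • (derivative f * q)) =
          f * derivative (Φ.symm q) - μ • (derivative f * Φ.symm q) := by
        intro f q
        apply Φ.injective
        rw [Φ.apply_symm_apply, hΦ, Φ.apply_symm_apply]
      obtain ⟨j', hj'⟩ := key μ' μ Φ.symm hΦ'
      have hcast : ((j + j' : ℕ) : F) = 0 := by push_cast; rw [← hj, ← hj']; ring
      have hjj : j + j' = 0 := Nat.cast_eq_zero.mp hcast
      have hj0 : j = 0 := by omega
      have : μ' - μ = 0 := by rw [hj, hj0, Nat.cast_zero]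
      exact (sub_eq_zero.mp this).symm
    · rintro rfl
      exact ⟨LinearEquiv.refl F F[X], fun f q => by simp⟩
end
end
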